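/- arXiv:1009.2199 — 9 statements merged into one kernel-verified Lean document; each statement's English description precedes it below -/
import Mathlib

section
/- Let A ⊆ ℤ^d be an affine semigroup (a finitely generated additive submonoid of ℤ^d), let Q be an arbitrary commutative additive monoid, and let φ : A → Q be a surjective monoid homomorphism. Then for every q ∈ Q, the fiber φ⁻¹(q), regarded as a subset of ℤ^d, possesses an affine stratification. -/
/-!
Write the affine semigroup `A` as the image of `ℕ^n` and pull `φ` back to `ψ : ℕ^n → Q`.
Every point of the fiber `ψ⁻¹(q)` lies above one of its minimal points, of which there are finitely
many by Dickson's lemma, and the difference lies in the submonoid `T = {u | ψ u + q = q}`;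
conversely, adding `T` to the fiber stays in it. `T` is subtractive, hence finitely generated
(again by Dickson's lemma), so `ψ⁻¹(q)` is a finite set plus an affine semigroup, and so is its
image in `ℤ^d`: a single stratum suffices.
-/

open Pointwise

/-- An affine stratification of `W ⊆ ℤ^d`: a finite partition of `W` into pairwise
disjoint sets, each of the form `F + A` for a finite set `F ⊆ ℤ^d` and a finitely
generated submonoid (affine semigroup) `A ⊆ ℤ^d`. -/
def IsAffineStratification {d : ℕ} (W : Set (Fin d → ℤ)) : Prop :=
  ∃ (r : ℕ) (F : Fin r → Finset (Fin d → ℤ)) (A : Fin r → AddSubmonoid (Fin d → ℤ)),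
    (∀ i, (A i).FG) ∧
    (Pairwise fun i j => Disjoint
      ((F i : Set (Fin d → ℤ)) + (A i : Set (Fin d → ℤ)))
      ((F j : Set (Fin d → ℤ)) + (A j : Set (Fin d → ℤ)))) ∧
    W = ⋃ i, ((F i : Set (Fin d → ℤ)) + (A i : Set (Fin d → ℤ)))

section CanonicallyOrdered

variable {M Q : Type*} [AddCommMonoid M] [PartialOrder M] [CanonicallyOrderedAdd M]
  [AddCommMonoid Q]

theorem AddMonoidHom.preimage_singleton_eq_minimal_add_comap_stabilizer [WellFoundedLT M]
    (ψ : M →+ Q) (q : Q) :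
    ψ ⁻¹' {q} = {u | Minimal (ψ · = q) u} +
      ((AddAction.stabilizerAddSubmonoid Q q).comap ψ : Set M) := by
  ext u
  constructor
  · intro hu
    obtain ⟨f, hfu, hf⟩ := exists_minimal_le_of_wellFoundedLT (ψ · = q) u hu
    obtain ⟨a, rfl⟩ := exists_add_of_le hfu
    refine Set.add_mem_add hf ?_
    change ψ a + q = q
    calc ψ a + q = ψ (f + a) := by rw [map_add, hf.prop, add_comm]
      _ = q := hu
  · rintro ⟨f, hf : Minimal (ψ · = q) f, t, ht, rfl⟩
    change ψ t + q = q at ht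
    change ψ (f + t) = q
    rw [map_add, hf.prop, add_comm, ht]

theorem AddMonoidHom.fg_comap_stabilizer [IsOrderedCancelAddMonoid M] [WellQuasiOrderedLE M]
    (ψ : M →+ Q) (q : Q) : ((AddAction.stabilizerAddSubmonoid Q q).comap ψ).FG := by
  refine AddSubmonoid.fg_of_subtractive fun x hx y hxy => ?_
  change ψ x + q = q at hx
  change ψ (x + y) + q = q at hxy
  change ψ y + q = q
  rwa [map_add, add_comm (ψ x), add_assoc, hx] at hxy

theorem AddMonoidHom.exists_finset_add_fg_eq_preimage_singleton [IsOrderedCancelAddMonoid M]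
    [WellQuasiOrderedLE M] (ψ : M →+ Q) (q : Q) :
    ∃ (F : Finset M) (T : AddSubmonoid M), T.FG ∧ ψ ⁻¹' {q} = (F : Set M) + (T : Set M) := by
  have hmin : {u | Minimal (ψ · = q) u}.Finite :=
    WellQuasiOrderedLE.finite_of_isAntichain (setOfPred_minimal_antichain _)
  refine ⟨hmin.toFinset, _, ψ.fg_comap_stabilizer q, ?_⟩
  rw [Set.Finite.coe_toFinset]
  exact ψ.preimage_singleton_eq_minimal_add_comap_stabilizer q

end CanonicallyOrdered

theorem AddSubmonoid.FG.exists_finset_add_fg_eq_image_preimage_singleton {M Q : Type*}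
    [AddCommMonoid M] [AddCommMonoid Q] {A : AddSubmonoid M} (hA : A.FG) (φ : A →+ Q) (q : Q) :
    ∃ (F : Finset M) (S : AddSubmonoid M),
      S.FG ∧ (↑) '' (φ ⁻¹' {q}) = (F : Set M) + (S : Set M) := by
  classical
  obtain ⟨n, π, rfl⟩ := AddSubmonoid.fg_iff_exists_fin_addMonoidHom.1 hA
  obtain ⟨F, T, hT, hfiber⟩ :=
    (φ.comp π.mrangeRestrict).exists_finset_add_fg_eq_preimage_singleton q
  have himage : (↑) '' (φ ⁻¹' {q}) = π '' ((φ.comp π.mrangeRestrict) ⁻¹' {q}) :=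
    calc (↑) '' (φ ⁻¹' {q})
        = (↑) '' (π.mrangeRestrict '' (π.mrangeRestrict ⁻¹' (φ ⁻¹' {q}))) := by
          rw [Set.image_preimage_eq _ π.mrangeRestrict_surjective]
      _ = π '' ((φ.comp π.mrangeRestrict) ⁻¹' {q}) := Set.image_image _ _ _
  refine ⟨F.image π, T.map π, hT.map π, ?_⟩
  rw [himage, hfiber, Set.image_add, Finset.coe_image, AddSubmonoid.coe_map]

theorem isAffineStratification_finset_add {d : ℕ} (F : Finset (Fin d → ℤ))
    {S : AddSubmonoid (Fin d → ℤ)} (hS : S.FG) :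
    IsAffineStratification ((F : Set (Fin d → ℤ)) + (S : Set (Fin d → ℤ))) :=
  ⟨1, fun _ => F, fun _ => S, fun _ => hS, Subsingleton.pairwise, (Set.iUnion_const _).symm⟩

theorem fiber_of_affine_semigroup_hom_isAffineStratification_general
    {d : ℕ} (A : AddSubmonoid (Fin d → ℤ)) (hA : A.FG)
    (Q : Type) [AddCommMonoid Q] (φ : A →+ Q)
    (q : Q) :
    IsAffineStratification {x : Fin d → ℤ | ∃ hx : x ∈ A, φ ⟨x, hx⟩ = q} := by
  obtain ⟨F, S, hS, hfiber⟩ := hA.exists_finset_add_fg_eq_image_preimage_singleton φ q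
  have hset : {x : Fin d → ℤ | ∃ hx : x ∈ A, φ ⟨x, hx⟩ = q} = (↑) '' (φ ⁻¹' {q}) :=
    (Subtype.coe_image (s := φ ⁻¹' {q})).symm
  rw [hset, hfiber]
  exact isAffineStratification_finset_add F hS

/-- If `φ : A → Q` is a surjective monoid homomorphism from an affine semigroup
`A ⊆ ℤ^d` to an arbitrary commutative monoid `Q`, then every fiber of `φ`,
regarded as a subset of `ℤ^d`, possesses an affine stratification. -/
theorem fiber_of_affine_semigroup_hom_isAffineStratification
    {d : ℕ} (A : AddSubmonoid (Fin d → ℤ)) (hA : A.FG)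
    (Q : Type) [AddCommMonoid Q] (φ : A →+ Q) (hφ : Function.Surjective φ)
    (q : Q) :
    IsAffineStratification {x : Fin d → ℤ | ∃ hx : x ∈ A, φ ⟨x, hx⟩ = q} :=
  fiber_of_affine_semigroup_hom_isAffineStratification_general A hA Q φ q
end

section
/- Fix a lattice game G = (Γ, B) played on the polyhedral set Λ = Π ∩ ℤ^d, with set of P-positions 𝒫. If the indistinguishability relation ∼ on Λ has only finitely many equivalence classes (i.e., the misère quotient Λ/∼ is finite), then 𝒫 possesses an affine stratification. -/
/-!
Scaling the rational cone generators gives integer vectors `w₁, …, w_k` spanning `C`, and every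
lattice point of `Π` is `x₀ + ∑ aⱼ wⱼ` with `a ∈ ℕ^k` and `x₀` in a finite set of bounded
base points. Indistinguishability is a congruence for the shifts by the `wⱼ`, so when it has
finitely many classes the class of `x₀ + ∑ aⱼ wⱼ` (hence membership in `𝒫`) is eventually
periodic in each `aⱼ`. Keeping only the lexicographically least representation of each position
makes representations unique, and the non-least ones form an upper set of `ℕ^k`; by Dickson's
lemma it has finitely many minimal elements, so leastness is eventually periodic too. Beyond a
common threshold `T` with common period `π`, `ℕ^k` splits into finitely many cells on which both
properties are constant, and each cell is mapped onto a translate of the affine semigroup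
generated by the `π • wⱼ` for its unbounded coordinates `j`.
-/

open Pointwise

/-- Indistinguishability of positions `p, q ∈ ℤ^d` relative to the recession cone
`C` and the set `Pos` of P-positions: `p + r ∈ Pos ⟺ q + r ∈ Pos` for all lattice
points `r` of `C`. -/
def Indist {d : ℕ} (C : Set (Fin d → ℝ)) (Pos : Set (Fin d → ℤ)) (p q : Fin d → ℤ) : Prop :=
  ∀ r : Fin d → ℤ, (fun j => (r j : ℝ)) ∈ C → (p + r ∈ Pos ↔ q + r ∈ Pos)

open Filter

section Cells

def truncMod (T π n : ℕ) : ℕ := if n < T then n else T + (n - T) % π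

variable {T π : ℕ}

lemma truncMod_eq_self {n : ℕ} (h : n < T + π) : truncMod T π n = n := by
  unfold truncMod
  split_ifs
  · rfl
  · rw [Nat.mod_eq_of_lt (by omega)]; omega

lemma truncMod_lt (hπ : 0 < π) (n : ℕ) : truncMod T π n < T + π := by
  unfold truncMod
  split_ifs
  · omega
  · have := Nat.mod_lt (n - T) hπ; omega

lemma truncMod_sub_period {n : ℕ} (h : T + π ≤ n) : truncMod T π (n - π) = truncMod T π n := by
  unfold truncMod
  rw [if_neg (by omega), if_neg (by omega), show n - T = n - π - T + π by omega, Nat.add_mod_right]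

lemma truncMod_eq_iff (hπ : 0 < π) {b n : ℕ} (hb : truncMod T π b = b) :
    truncMod T π n = b ↔ ∃ t, n = b + if T ≤ b then π * t else 0 := by
  unfold truncMod at hb ⊢
  by_cases hbT : T ≤ b
  · have hbπ : b - T < π := by
      rw [if_neg (by omega)] at hb
      have := Nat.mod_lt (b - T) hπ
      omega
    simp only [if_pos hbT]
    constructor
    · intro h
      split_ifs at h
      · omega
      · exact ⟨(n - T) / π, by have := Nat.div_add_mod (n - T) π; omega⟩
    · rintro ⟨t, rfl⟩
      rw [if_neg (by omega), show b + π * t - T = b - T + π * t by omega,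
        Nat.add_mul_mod_self_left, Nat.mod_eq_of_lt hbπ]
      omega
  · simp only [if_neg hbT, add_zero, exists_const]
    split_ifs <;> omega

variable {k : ℕ}

def cellBase (T π : ℕ) (a : Fin k → ℕ) : Fin k → ℕ := fun j => truncMod T π (a j)

lemma cellBase_cellBase (hπ : 0 < π) (a : Fin k → ℕ) :
    cellBase T π (cellBase T π a) = cellBase T π a :=
  funext fun j => truncMod_eq_self (truncMod_lt hπ (a j))

lemma cellBase_eq_iff (hπ : 0 < π) {a b : Fin k → ℕ} (hb : cellBase T π b = b) :
    cellBase T π a = b ↔ ∃ t : Fin k → ℕ, a = b + fun j => if T ≤ b j then π * t j else 0 := by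
  simp only [funext_iff, cellBase, Pi.add_apply] at hb ⊢
  simp only [truncMod_eq_iff hπ (hb _)]
  exact Classical.skolem

def PeriodicBeyond {β : Type*} (T π : ℕ) (f : (Fin k → ℕ) → β) : Prop :=
  ∀ (a : Fin k → ℕ) (j : Fin k), f (a + Pi.single j (T + π)) = f (a + Pi.single j T)

variable {β : Type*} {f : (Fin k → ℕ) → β}

lemma PeriodicBeyond.of_factor {γ : Type*} {g : (Fin k → ℕ) → γ} (hf : PeriodicBeyond T π f)
    (hg : ∀ a b, f a = f b → g a = g b) : PeriodicBeyond T π g :=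
  fun a j => hg _ _ (hf a j)

lemma PeriodicBeyond.apply_cellBase (hf : PeriodicBeyond T π f) (hπ : 0 < π) (a : Fin k → ℕ) :
    f (cellBase T π a) = f a := by
  induction a using WellFoundedLT.induction with
  | _ a ih =>
  by_cases hsmall : ∀ j, a j < T + π
  · rw [show cellBase T π a = a from funext fun j => truncMod_eq_self (hsmall j)]
  push Not at hsmall
  obtain ⟨j, hj⟩ := hsmall
  set c := a - Pi.single j (T + π)
  have ha : c + Pi.single j (T + π) = a := funext fun l => by
    rcases eq_or_ne l j with rfl | hl <;> simp [c, *]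
  have hlt : c + Pi.single j T < a := Pi.lt_def.2 ⟨fun l => by
    rcases eq_or_ne l j with rfl | hl <;> simp [c, *]; omega, j, by simp [c]; omega⟩
  have hcell : cellBase T π (c + Pi.single j T) = cellBase T π a := funext fun l => by
    rcases eq_or_ne l j with rfl | hl
    · simp only [cellBase, Pi.add_apply, c, Pi.sub_apply, Pi.single_eq_same]
      rw [show a l - (T + π) + T = a l - π by omega, truncMod_sub_period hj]
    · simp [cellBase, c, hl]
  calc f (cellBase T π a) = f (c + Pi.single j T) := by rw [← hcell, ih _ hlt]
    _ = f a := by rw [← hf, ha]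

lemma IsUpperSet.eventually_periodicBeyond {U : Set (Fin k → ℕ)} (hU : IsUpperSet U) (π : ℕ) :
    ∀ᶠ T in atTop, PeriodicBeyond T π (· ∈ U) := by
  obtain ⟨B, hB⟩ := (WellQuasiOrderedLE.finite_of_isAntichain
    (setOfPred_minimal_antichain (· ∈ U))).bddAbove
  filter_upwards [eventually_ge_atTop (∑ j, B j)] with T hT a j
  have hsingle : a + Pi.single j T ≤ a + Pi.single j (T + π) :=
    add_le_add_right (Pi.single_mono j (by omega)) a
  refine propext ⟨fun h => ?_, fun h => hU hsingle h⟩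
  obtain ⟨m, hma, hm⟩ := exists_minimal_le_of_wellFoundedLT (· ∈ U) _ h
  refine hU (fun l => ?_) hm.prop
  have hmB : m l ≤ B l := hB hm l
  have hBT : B l ≤ ∑ j, B j := Finset.single_le_sum (fun _ _ => Nat.zero_le _) (Finset.mem_univ l)
  have := hma l
  rcases eq_or_ne l j with rfl | hl <;> simp_all; omega

lemma exists_eventually_periodicBeyond {Q : Type*} [Finite Q] (f : (Fin k → ℕ) → Q)
    (hf : ∀ a b c, f a = f b → f (a + c) = f (b + c)) :
    ∃ π, 0 < π ∧ ∀ᶠ T in atTop, PeriodicBeyond T π f := by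
  -- `G t j` is the graph of the map `f a ↦ f (a + t • eⱼ)` (well defined by `hf`); there are
  -- finitely many such graphs, so two values of `t` give the same one.
  let G : ℕ → Fin k → Set (Q × Q) := fun t j =>
    Set.range fun a : Fin k → ℕ => (f a, f (a + Pi.single j t))
  obtain ⟨t₁, -, t₂, -, hlt, hG⟩ :=
    Set.infinite_univ.exists_lt_map_eq_of_mapsTo (Set.mapsTo_univ G _) Set.finite_univ
  have key : ∀ (a : Fin k → ℕ) j, f (a + Pi.single j t₂) = f (a + Pi.single j t₁) := by
    intro a j
    obtain ⟨a', ha'⟩ : (f a, f (a + Pi.single j t₂)) ∈ G t₁ j := by rw [hG]; exact ⟨a, rfl⟩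
    simp only [Prod.mk.injEq] at ha'
    rw [← ha'.2, hf _ _ _ ha'.1]
  refine ⟨t₂ - t₁, by omega, ?_⟩
  filter_upwards [eventually_ge_atTop t₁] with T hT a j
  have := key (a + Pi.single j (T - t₁)) j
  rwa [add_assoc, add_assoc, ← Pi.single_add, ← Pi.single_add,
    show T - t₁ + t₂ = T + (t₂ - t₁) by omega, show T - t₁ + t₁ = T by omega] at this

end Cells

lemma IsAffineStratification.of_finite_iUnion {d : ℕ} {ι : Type*} [Finite ι]
    {W : Set (Fin d → ℤ)} (F : ι → Finset (Fin d → ℤ)) (A : ι → AddSubmonoid (Fin d → ℤ))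
    (hA : ∀ i, (A i).FG)
    (hdisj : Pairwise fun i j => Disjoint
      ((F i : Set (Fin d → ℤ)) + (A i : Set (Fin d → ℤ)))
      ((F j : Set (Fin d → ℤ)) + (A j : Set (Fin d → ℤ))))
    (hW : W = ⋃ i, ((F i : Set (Fin d → ℤ)) + (A i : Set (Fin d → ℤ)))) :
    IsAffineStratification W := by
  obtain ⟨r, ⟨e⟩⟩ := Finite.exists_equiv_fin ι
  refine ⟨r, F ∘ e.symm, A ∘ e.symm, fun i => hA _, fun i j hij => hdisj (e.symm.injective.ne hij),
    ?_⟩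
  rw [hW]
  exact (e.symm.surjective.iUnion_comp fun i => (F i : Set (Fin d → ℤ)) + (A i : Set _)).symm

section LatticePoint

variable {ι V : Type*} [AddCommMonoid V] {k : ℕ} (x₀ : ι → V) (w : Fin k → V)

def latticePoint (p : ι × (Fin k → ℕ)) : V := x₀ p.1 + Fintype.linearCombination ℕ w p.2

lemma latticePoint_add (i : ι) (a c : Fin k → ℕ) :
    latticePoint x₀ w (i, a + c) = latticePoint x₀ w (i, a) + Fintype.linearCombination ℕ w c := by
  simp only [latticePoint, map_add, add_assoc]

variable [LinearOrder ι]

-- A well-order on representations that is invariant under translating the `ℕ^k` component.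
def repKey (p : ι × (Fin k → ℕ)) : ι ×ₗ Lex (Fin k → ℕ) := toLex (p.1, toLex p.2)

def IsLeastRep (p : ι × (Fin k → ℕ)) : Prop :=
  ∀ q, latticePoint x₀ w q = latticePoint x₀ w p → repKey p ≤ repKey q

variable {x₀ w}

lemma IsLeastRep.eq {p q : ι × (Fin k → ℕ)} (hp : IsLeastRep x₀ w p) (hq : IsLeastRep x₀ w q)
    (h : latticePoint x₀ w p = latticePoint x₀ w q) : p = q := by
  simpa [repKey, Prod.ext_iff] using le_antisymm (hp q h.symm) (hq p h)

variable (x₀ w)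

lemma isUpperSet_setOf_not_isLeastRep (i : ι) : IsUpperSet {a | ¬ IsLeastRep x₀ w (i, a)} := by
  intro a b hab ha
  obtain ⟨δ, rfl⟩ := exists_add_of_le hab
  simp only [IsLeastRep, not_forall, not_le, Set.mem_ofPred_eq] at ha ⊢
  obtain ⟨q, hq, hlt⟩ := ha
  refine ⟨(q.1, q.2 + δ), by rw [latticePoint_add, latticePoint_add, ← hq], ?_⟩
  rcases Prod.Lex.toLex_lt_toLex.1 hlt with h | ⟨h, h'⟩
  · exact Prod.Lex.toLex_lt_toLex.2 (Or.inl h)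
  · exact Prod.Lex.toLex_lt_toLex.2 (Or.inr ⟨h, by simpa using add_lt_add_right h' (toLex δ)⟩)

variable [Finite ι]

lemma exists_isLeastRep (p : ι × (Fin k → ℕ)) :
    ∃ q, IsLeastRep x₀ w q ∧ latticePoint x₀ w q = latticePoint x₀ w p := by
  obtain ⟨q, hq, hmin⟩ := (InvImage.wf repKey wellFounded_lt).has_min
    {q | latticePoint x₀ w q = latticePoint x₀ w p} ⟨p, rfl⟩
  exact ⟨q, fun r hr => not_lt.1 (hmin r (hr.trans hq)), hq⟩

end LatticePoint

section Strata

variable {ι V : Type*} [AddCommMonoid V] {k : ℕ} (x₀ : ι → V) (w : Fin k → V) {T π : ℕ}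

def cellGen (T π : ℕ) (b : Fin k → ℕ) : Fin k → V := fun j => if T ≤ b j then π • w j else 0

lemma mem_singleton_add_closure_cellGen (hπ : 0 < π) (i : ι) {b : Fin k → ℕ}
    (hb : cellBase T π b = b) {x : V} :
    x ∈ ({latticePoint x₀ w (i, b)} : Set V) +
        (AddSubmonoid.closure (Set.range (cellGen w T π b)) : Set V) ↔
      ∃ a, cellBase T π a = b ∧ latticePoint x₀ w (i, a) = x := by
  have hgen : ∀ t : Fin k → ℕ, Fintype.linearCombination ℕ w
      (fun j => if T ≤ b j then π * t j else 0) = ∑ j, t j • cellGen w T π b j := fun t => by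
    simp only [Fintype.linearCombination_apply, cellGen]
    refine Finset.sum_congr rfl fun j _ => ?_
    split_ifs <;> simp [mul_comm π, mul_smul]
  simp only [Set.singleton_add, Set.mem_image, SetLike.mem_coe,
    AddSubmonoid.mem_closure_range_iff_of_fintype, cellBase_eq_iff hπ hb]
  constructor
  · rintro ⟨_, ⟨t, rfl⟩, rfl⟩
    exact ⟨_, ⟨t, rfl⟩, by rw [latticePoint_add, hgen]⟩
  · rintro ⟨_, ⟨t, rfl⟩, rfl⟩
    exact ⟨_, ⟨t, rfl⟩, by rw [latticePoint_add, hgen]⟩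

variable [LinearOrder ι] [Finite ι]

lemma exists_cellBase_invariant {Pos : Set V} (hπ : 0 < π)
    (hper : ∀ᶠ T in atTop, ∀ i, PeriodicBeyond T π fun a => latticePoint x₀ w (i, a) ∈ Pos) :
    ∃ T, ∀ i a, (IsLeastRep x₀ w (i, cellBase T π a) ↔ IsLeastRep x₀ w (i, a)) ∧
      (latticePoint x₀ w (i, cellBase T π a) ∈ Pos ↔ latticePoint x₀ w (i, a) ∈ Pos) := by
  obtain ⟨T, hPos, hRep⟩ := (hper.and (eventually_all.2 fun i =>
    (isUpperSet_setOf_not_isLeastRep x₀ w i).eventually_periodicBeyond π)).exists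
  exact ⟨T, fun i a => ⟨not_iff_not.1 (Iff.of_eq ((hRep i).apply_cellBase hπ a)),
    Iff.of_eq ((hPos i).apply_cellBase hπ a)⟩⟩

theorem isAffineStratification_of_periodicBeyond {d : ℕ} (x₀ : ι → (Fin d → ℤ))
    (w : Fin k → (Fin d → ℤ)) {Pos : Set (Fin d → ℤ)} (hcover : Pos ⊆ Set.range (latticePoint x₀ w))
    (hπ : 0 < π)
    (hper : ∀ᶠ T in atTop, ∀ i, PeriodicBeyond T π fun a => latticePoint x₀ w (i, a) ∈ Pos) :
    IsAffineStratification Pos := by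
  obtain ⟨T, hcell⟩ := exists_cellBase_invariant x₀ w hπ hper
  let S := {p : ι × (Fin k → ℕ) |
    cellBase T π p.2 = p.2 ∧ IsLeastRep x₀ w p ∧ latticePoint x₀ w p ∈ Pos}
  have hS : S.Finite :=
    (Set.finite_univ.prod (Set.Finite.pi fun _ => Set.finite_Iio (T + π))).subset fun p hp =>
      ⟨trivial, fun j _ => hp.1 ▸ truncMod_lt hπ (p.2 j)⟩
  have := hS.to_subtype
  have hmem : ∀ p : S, ∀ x, x ∈ ({latticePoint x₀ w p.1} : Set _) +
      (AddSubmonoid.closure (Set.range (cellGen w T π p.1.2)) : Set _) ↔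
      ∃ a, cellBase T π a = p.1.2 ∧ latticePoint x₀ w (p.1.1, a) = x :=
    fun p x => mem_singleton_add_closure_cellGen x₀ w hπ p.1.1 p.2.1
  have hleast : ∀ p : S, ∀ a, cellBase T π a = p.1.2 → IsLeastRep x₀ w (p.1.1, a) :=
    fun p a ha => (hcell _ a).1.1 (by rw [ha]; exact p.2.2.1)
  refine .of_finite_iUnion (fun p : S => {latticePoint x₀ w p.1})
    (fun p => AddSubmonoid.closure (Set.range (cellGen w T π p.1.2)))
    (fun p => (AddMonoid.fg_iff_addSubmonoid_fg _).1 inferInstance) ?_ ?_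
  · intro p q hpq
    refine Set.disjoint_left.2 fun x hxp hxq => hpq ?_
    obtain ⟨a, ha, rfl⟩ := (hmem p x).1 (by simpa using hxp)
    obtain ⟨b, hb, hab⟩ := (hmem q _).1 (by simpa using hxq)
    have := (hleast q b hb).eq (hleast p a ha) hab
    simp only [Prod.mk.injEq] at this
    exact Subtype.ext (Prod.ext this.1.symm (by rw [← ha, ← hb, this.2]))
  · ext x
    simp only [Set.mem_iUnion, Finset.coe_singleton, hmem]
    constructor
    · intro hx
      obtain ⟨q, rfl⟩ := hcover hx
      obtain ⟨r, hr, hrq⟩ := exists_isLeastRep x₀ w q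
      exact ⟨⟨(r.1, cellBase T π r.2), cellBase_cellBase hπ _, (hcell _ _).1.2 hr,
        (hcell _ _).2.2 (hrq ▸ hx)⟩, r.2, rfl, hrq⟩
    · rintro ⟨p, a, ha, rfl⟩
      exact (hcell _ a).2.1 (by rw [ha]; exact p.2.2.2)

theorem isAffineStratification_of_finite_classes {d : ℕ} {Q : Type*} [Finite Q]
    (x₀ : ι → (Fin d → ℤ)) (w : Fin k → (Fin d → ℤ)) {Pos : Set (Fin d → ℤ)}
    (hcover : Pos ⊆ Set.range (latticePoint x₀ w)) (f : (Fin k → ℕ) → Q)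
    (hf : ∀ a b c, f a = f b → f (a + c) = f (b + c))
    (hPos : ∀ a b, f a = f b → ∀ i,
      latticePoint x₀ w (i, a) ∈ Pos ↔ latticePoint x₀ w (i, b) ∈ Pos) :
    IsAffineStratification Pos := by
  obtain ⟨π, hπ, hper⟩ := exists_eventually_periodicBeyond f hf
  exact isAffineStratification_of_periodicBeyond x₀ w hcover hπ
    (hper.mono fun T hT i => hT.of_factor fun a b h => propext (hPos a b h i))

end Strata

section Geometry

def nonnegSpan {κ E : Type*} [Fintype κ] [AddCommMonoid E] [Module ℝ E] (v : κ → E) : Set E :=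
  {x | ∃ c : κ → ℝ, (∀ i, 0 ≤ c i) ∧ x = ∑ i, c i • v i}

variable {κ E : Type*} [Fintype κ] [AddCommMonoid E] [Module ℝ E]

lemma zero_mem_nonnegSpan (v : κ → E) : 0 ∈ nonnegSpan v := ⟨0, fun _ => le_rfl, by simp⟩

lemma add_mem_nonnegSpan {v : κ → E} {x y : E} (hx : x ∈ nonnegSpan v) (hy : y ∈ nonnegSpan v) :
    x + y ∈ nonnegSpan v := by
  obtain ⟨c, hc, rfl⟩ := hx
  obtain ⟨c', hc', rfl⟩ := hy
  exact ⟨c + c', fun i => add_nonneg (hc i) (hc' i), by simp [add_smul, Finset.sum_add_distrib]⟩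

lemma add_nonnegSpan_add_mem {P : Set E} {v : κ → E} {x y : E} (hx : x ∈ P + nonnegSpan v)
    (hy : y ∈ nonnegSpan v) : x + y ∈ P + nonnegSpan v := by
  obtain ⟨p, hp, c, hc, rfl⟩ := hx
  exact ⟨p, hp, c + y, add_mem_nonnegSpan hc hy, (add_assoc _ _ _).symm⟩

lemma nonnegSpan_smul_of_pos {v : κ → E} {N : κ → ℝ} (hN : ∀ i, 0 < N i) :
    nonnegSpan (fun i => N i • v i) = nonnegSpan v := by
  ext x
  constructor
  · rintro ⟨c, hc, rfl⟩
    exact ⟨fun i => c i * N i, fun i => mul_nonneg (hc i) (hN i).le, by simp [mul_smul]⟩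
  · rintro ⟨c, hc, rfl⟩
    refine ⟨fun i => c i / N i, fun i => div_nonneg (hc i) (hN i).le, ?_⟩
    simp [smul_smul, div_mul_cancel₀ _ (hN _).ne']

variable {d k : ℕ}

def castVec (d : ℕ) : (Fin d → ℤ) →+ (Fin d → ℝ) := (Int.castAddHom ℝ).compLeft (Fin d)

lemma castVec_apply (x : Fin d → ℤ) : castVec d x = fun j => (x j : ℝ) := rfl

lemma castVec_linearCombination (w : Fin k → (Fin d → ℤ)) (a : Fin k → ℕ) :
    castVec d (Fintype.linearCombination ℕ w a) = ∑ i, (a i : ℝ) • castVec d (w i) := by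
  rw [Fintype.linearCombination_apply, map_sum]
  exact Finset.sum_congr rfl fun i _ => by rw [map_nsmul, Nat.cast_smul_eq_nsmul]

lemma exists_nat_smul_eq_castVec (q : Fin d → ℚ) :
    ∃ N : ℕ, 0 < N ∧ ∃ z : Fin d → ℤ, castVec d z = (N : ℝ) • fun j => (q j : ℝ) := by
  refine ⟨∏ j, (q j).den, Finset.prod_pos fun j _ => (q j).pos, ?_⟩
  choose m hm using fun j => Finset.dvd_prod_of_mem (fun j => (q j).den) (Finset.mem_univ j)
  refine ⟨fun j => (q j).num * m j, funext fun j => ?_⟩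
  simp only [castVec_apply, Pi.smul_apply, smul_eq_mul]
  rw [hm j, Rat.cast_def]
  push_cast
  field_simp

lemma exists_int_generators (cv : Fin k → Fin d → ℚ) :
    ∃ w : Fin k → (Fin d → ℤ),
      nonnegSpan (fun i => castVec d (w i)) = nonnegSpan fun i j => (cv i j : ℝ) := by
  choose N hN z hz using fun i => exists_nat_smul_eq_castVec (cv i)
  exact ⟨z, by simp only [hz]; exact nonnegSpan_smul_of_pos fun i => Nat.cast_pos.2 (hN i)⟩

open Bornology

lemma finite_setOf_castVec_mem {K : Set (Fin d → ℝ)} (hK : IsBounded K) :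
    {x : Fin d → ℤ | castVec d x ∈ K}.Finite := by
  obtain ⟨R, hR⟩ := hK.subset_closedBall 0
  refine (Set.finite_Icc (fun _ => -⌈R⌉) fun _ => ⌈R⌉).subset fun x hx => ?_
  have hj : ∀ j, |x j| ≤ ⌈R⌉ := fun j => by
    have := (norm_le_pi_norm (castVec d x) j).trans (mem_closedBall_zero_iff.1 (hR hx))
    simp only [castVec_apply, Real.norm_eq_abs] at this
    exact_mod_cast this.trans (Int.le_ceil R)
  exact ⟨fun j => (abs_le.1 (hj j)).1, fun j => (abs_le.1 (hj j)).2⟩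

lemma exists_castVec_sub_eq (w : Fin k → (Fin d → ℤ)) {x : Fin d → ℤ} {p : Fin d → ℝ}
    {c : Fin k → ℝ} (hc : ∀ i, 0 ≤ c i) (hx : castVec d x = p + ∑ i, c i • castVec d (w i)) :
    ∃ a : Fin k → ℕ, ∃ t ∈ Set.Icc (0 : Fin k → ℝ) 1,
      castVec d (x - Fintype.linearCombination ℕ w a) = p + ∑ i, t i • castVec d (w i) := by
  refine ⟨fun i => ⌊c i⌋₊, fun i => c i - ⌊c i⌋₊,
    ⟨fun i => sub_nonneg.2 (Nat.floor_le (hc i)),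
      fun i => by linarith [Nat.lt_floor_add_one (c i), show (1 : Fin k → ℝ) i = 1 from rfl]⟩, ?_⟩
  simp only [map_sub, castVec_linearCombination, hx, sub_smul, Finset.sum_sub_distrib]
  abel

lemma exists_finite_base {P : Set (Fin d → ℝ)} (hP : IsBounded P) (w : Fin k → (Fin d → ℤ)) :
    ∃ (n : ℕ) (x₀ : Fin n → (Fin d → ℤ)),
      (∀ i, castVec d (x₀ i) ∈ P + nonnegSpan fun i => castVec d (w i)) ∧
      ∀ x, castVec d x ∈ P + nonnegSpan (fun i => castVec d (w i)) →
        x ∈ Set.range (latticePoint x₀ w) := by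
  set v := fun i => castVec d (w i)
  have hZ : IsBounded ((fun t : Fin k → ℝ => ∑ i, t i • v i) '' Set.Icc 0 1) :=
    (isCompact_Icc.image (by fun_prop)).isBounded
  obtain ⟨n, x₀, hx₀⟩ := ((finite_setOf_castVec_mem (hP.add hZ)).subset
    (Set.inter_subset_right (s := {y | castVec d y ∈ P + nonnegSpan v}))).fin_embedding
  refine ⟨n, x₀, fun i => (hx₀.le ⟨i, rfl⟩).1, fun x hx => ?_⟩
  obtain ⟨p, hp, _, ⟨c, hc, rfl⟩, hpx⟩ := hx
  obtain ⟨a, t, ht, hxa⟩ := exists_castVec_sub_eq w hc hpx.symm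
  obtain ⟨i, hi⟩ : x - Fintype.linearCombination ℕ w a ∈ Set.range x₀ := hx₀ ▸
    ⟨⟨p, hp, _, ⟨t, ht.1, rfl⟩, hxa.symm⟩, ⟨p, hp, _, ⟨t, ht, rfl⟩, hxa.symm⟩⟩
  exact ⟨(i, a), by simp [latticePoint, hi]⟩

end Geometry

section Indist

variable {d : ℕ} {C : Set (Fin d → ℝ)} {Pos : Set (Fin d → ℤ)}

lemma Indist.add {p q v : Fin d → ℤ} (h : Indist C Pos p q)
    (hC : ∀ x ∈ C, ∀ y ∈ C, x + y ∈ C) (hv : castVec d v ∈ C) :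
    Indist C Pos (p + v) (q + v) := fun r hr => by
  have hvr := hC _ hv _ hr
  rw [← castVec_apply, ← map_add] at hvr
  simpa only [add_assoc] using h (v + r) hvr

lemma Indist.mem_iff {p q : Fin d → ℤ} (h : Indist C Pos p q) (h0 : (0 : Fin d → ℝ) ∈ C) :
    p ∈ Pos ↔ q ∈ Pos := by
  simpa using h 0 (by rw [← castVec_apply, map_zero]; exact h0)

lemma indist_of_quot_mk_eq {Λ : Set (Fin d → ℤ)} {p q : {x : Fin d → ℤ // x ∈ Λ}}
    (h : Quot.mk (fun p q : {x : Fin d → ℤ // x ∈ Λ} => Indist C Pos p q) p = Quot.mk _ q) :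
    Indist C Pos p q :=
  (Equivalence.eqvGen_iff (r := fun p q : {x : Fin d → ℤ // x ∈ Λ} => Indist C Pos p q)
    ⟨fun _ _ _ => Iff.rfl, fun h r hr => (h r hr).symm,
      fun h₁ h₂ r hr => (h₁ r hr).trans (h₂ r hr)⟩).1 (Quot.eqvGen_exact h)

end Indist

theorem lattice_game_finite_misere_quotient_isAffineStratification_general {d : ℕ}
    (m k : ℕ) (pv : Fin m → (Fin d → ℚ)) (cv : Fin k → (Fin d → ℚ))
    (P C Pl : Set (Fin d → ℝ))
    -- Π = P + C is a pointed rational polyhedron with recession cone C of dimension d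
    (hP : P = convexHull ℝ (Set.range fun i => fun j => ((pv i j : ℝ))))
    (hC : C = {x | ∃ c : Fin k → ℝ, (∀ i, 0 ≤ c i) ∧
      x = ∑ i, c i • fun j => ((cv i j : ℝ))})
    (hPl : Pl = P + C)
    -- Λ = Π ∩ ℤ^d
    (Λ : Set (Fin d → ℤ)) (hΛ : Λ = {x : Fin d → ℤ | (fun j => (x j : ℝ)) ∈ Pl})
    -- B = Λ ∖ D is a game board: D is a finite Γ-order ideal of defeated positions
    (D : Finset (Fin d → ℤ))
    (B : Set (Fin d → ℤ)) (hB : B = Λ \ (D : Set (Fin d → ℤ)))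
    -- Pos is the set of P-positions
    (Pos : Set (Fin d → ℤ)) (hPosB : Pos ⊆ B)
    -- the misère quotient Λ/∼ is finite
    (hfin : Finite (Quot fun p q : {x : Fin d → ℤ // x ∈ Λ} =>
      Indist C Pos (p : Fin d → ℤ) (q : Fin d → ℤ))) :
    IsAffineStratification Pos := by
  obtain ⟨w, hw⟩ := exists_int_generators cv
  have hCw : C = nonnegSpan fun i => castVec d (w i) := hC.trans hw.symm
  have hΛC : ∀ x, x ∈ Λ ↔ castVec d x ∈ P + nonnegSpan fun i => castVec d (w i) := fun x => by
    rw [hΛ, hPl, ← hCw]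
    rfl
  have hPb : Bornology.IsBounded P := hP ▸ (Set.finite_range _).isCompact_convexHull ℝ |>.isBounded
  obtain ⟨n, x₀, hx₀, hcover⟩ := exists_finite_base hPb w
  have hcomb : ∀ c,
      castVec d (Fintype.linearCombination ℕ w c) ∈ nonnegSpan fun i => castVec d (w i) :=
    fun c => by rw [castVec_linearCombination]; exact ⟨_, fun i => Nat.cast_nonneg _, rfl⟩
  have hlp : ∀ p, latticePoint x₀ w p ∈ Λ := fun p => (hΛC _).2 <| by
    rw [latticePoint, map_add]
    exact add_nonnegSpan_add_mem (hx₀ p.1) (hcomb p.2)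
  let cls : (Fin k → ℕ) → Fin n → Quot fun p q : {x : Fin d → ℤ // x ∈ Λ} => Indist C Pos p q :=
    fun a i => Quot.mk _ ⟨latticePoint x₀ w (i, a), hlp _⟩
  refine isAffineStratification_of_finite_classes x₀ w
    (fun x hx => hcover x ((hΛC x).1 (hB ▸ hPosB hx).1)) cls (fun a b c h => funext fun i => ?_)
    fun a b h i => (indist_of_quot_mk_eq (congr_fun h i)).mem_iff (hCw ▸ zero_mem_nonnegSpan _)
  apply Quot.sound
  show Indist C Pos (latticePoint x₀ w (i, a + c)) (latticePoint x₀ w (i, b + c))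
  rw [latticePoint_add, latticePoint_add]
  exact (indist_of_quot_mk_eq (congr_fun h i)).add
    (hCw ▸ fun x hx y hy => add_mem_nonnegSpan hx hy) (hCw ▸ hcomb c)

/-- A lattice game `G = (Γ, B)` is played on `Λ = Π ∩ ℤ^d`, where `Π = P + C` is a
pointed rational convex polyhedron with full-dimensional recession cone `C`.  If the
misère quotient `Λ/∼` is finite (the indistinguishability relation `∼` has finitely
many classes), then the set `Pos` of P-positions of `G` possesses an affine
stratification. -/
theorem lattice_game_finite_misere_quotient_isAffineStratification {d : ℕ}
    (m k : ℕ) (pv : Fin m → (Fin d → ℚ)) (cv : Fin k → (Fin d → ℚ))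
    (P C Pl : Set (Fin d → ℝ))
    -- Π = P + C is a pointed rational polyhedron with recession cone C of dimension d
    (hP : P = convexHull ℝ (Set.range fun i => fun j => ((pv i j : ℝ))))
    (hC : C = {x | ∃ c : Fin k → ℝ, (∀ i, 0 ≤ c i) ∧
      x = ∑ i, c i • fun j => ((cv i j : ℝ))})
    (hpointed : C ∩ (-C) = {(0 : Fin d → ℝ)})
    (hdim : Submodule.span ℝ C = ⊤)
    (hPl : Pl = P + C)
    -- Λ = Π ∩ ℤ^d
    (Λ : Set (Fin d → ℤ)) (hΛ : Λ = {x : Fin d → ℤ | (fun j => (x j : ℝ)) ∈ Pl})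
    -- Γ is a rule set
    (Γ : Finset (Fin d → ℤ)) (hΓ0 : (0 : Fin d → ℤ) ∉ Γ)
    (ℓ : (Fin d → ℝ) →ₗ[ℝ] ℝ)
    (hℓΓ : ∀ γ ∈ Γ, 0 < ℓ (fun j => (γ j : ℝ)))
    (hℓC : ∀ x ∈ C, x ≠ 0 → 0 < ℓ x)
    (F : Finset (Fin d → ℤ)) (hFΛ : (F : Set (Fin d → ℤ)) ⊆ Λ)
    (hpath : ∀ p ∈ Λ, ∃ (r : ℕ) (seq : ℕ → (Fin d → ℤ)),
      seq r = p ∧ seq 0 ∈ F ∧ (∀ i ≤ r, seq i ∈ Λ) ∧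
      ∀ i < r, seq (i + 1) - seq i ∈ Γ)
    -- B = Λ ∖ D is a game board: D is a finite Γ-order ideal of defeated positions
    (D : Finset (Fin d → ℤ)) (hDΛ : (D : Set (Fin d → ℤ)) ⊆ Λ)
    (hD : ∀ p ∈ Λ, ∀ q ∈ D, q - p ∈ AddSubmonoid.closure (Γ : Set (Fin d → ℤ)) → p ∈ D)
    (B : Set (Fin d → ℤ)) (hB : B = Λ \ (D : Set (Fin d → ℤ)))
    -- Pos is the set of P-positions
    (Pos : Set (Fin d → ℤ)) (hPosB : Pos ⊆ B)
    (hPos : (Pos + (Γ : Set (Fin d → ℤ))) ∩ B = B \ Pos)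
    -- the misère quotient Λ/∼ is finite
    (hfin : Finite (Quot fun p q : {x : Fin d → ℤ // x ∈ Λ} =>
      Indist C Pos (p : Fin d → ℤ) (q : Fin d → ℤ))) :
    IsAffineStratification Pos :=
  lattice_game_finite_misere_quotient_isAffineStratification_general m k pv cv P C Pl hP hC hPl Λ hΛ
    D B hB Pos hPosB hfin
end

section
/- Every affine semigroup A ⊆ ℤ^d can be written as a finite disjoint union of translates fᵢ + Aᵢ of normal affine semigroups Aᵢ ⊆ ℤ^d; that is, A possesses an affine stratification in which each stratum is a single translate of a normal affine semigroup. -/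
/-!
Write `A` as the image of `φ : ℕ^k →+ ℤ^d` sending the standard basis to generators of `A`.
The lexicographically least points of the fibres of `φ` form a lower set `D ⊆ ℕ^k` on which `φ`
is a bijection onto `A`. By Dickson's lemma the complement of `D` has finitely many minimal
elements; if `b` bounds them, membership in `D` only depends on `v ⊓ b`, so `D` is the disjoint
union of the fibres of `v ↦ v ⊓ b` over the finitely many `w ∈ D` with `w ≤ b`, and such a fibre
is `w + ℕ^S` with `S = {j | w j = b j}`. As `φ` is injective on it, its image `φ w + φ(ℕ^S)` is a
translate of a copy of `ℕ^S`, which is normal: `n • x = φ m` with `x = φ p - φ q` forces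
`n • p = m + n • q`, hence `q ≤ p` and `x = φ (p - q)`.
-/

open Pointwise

/-- A normal affine semigroup: a finitely generated submonoid of `ℤ^d` that is
saturated in the subgroup it generates (equivalently, the intersection of a
rational polyhedral cone with a sublattice of `ℤ^d`). -/
def IsNormalAffineSemigroup {d : ℕ} (A : AddSubmonoid (Fin d → ℤ)) : Prop :=
  A.FG ∧ ∀ (n : ℕ) (x : Fin d → ℤ), 0 < n →
    x ∈ AddSubgroup.closure (A : Set (Fin d → ℤ)) → n • x ∈ A → x ∈ A

open Function

theorem IsLowerSet.exists_inf_mem_iff {α : Type*} [Lattice α] [Nonempty α]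
    [WellQuasiOrderedLE α] {D : Set α} (hD : IsLowerSet D) : ∃ b, ∀ v, v ⊓ b ∈ D ↔ v ∈ D := by
  have hpwo := Set.isPWO_of_wellQuasiOrderedLE Dᶜ
  -- `b` bounds the minimal elements of `Dᶜ`, an antichain and hence finite
  obtain ⟨b, hb⟩ := ((setOfPred_minimal_antichain _).finite_of_partiallyWellOrderedOn
    (hpwo.mono (setOfPred_minimal_subset _))).bddAbove
  refine ⟨b, fun v => ⟨fun hvb => ?_, fun hv => hD inf_le_left hv⟩⟩
  by_contra hv
  obtain ⟨m, hmv, hm⟩ := hpwo.exists_le_minimal hv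
  exact hm.1 (hD (le_inf hmv (hb hm)) hvb)

theorem AddSubmonoid.exists_sub_of_mem_closure {G : Type*} [AddCommGroup G]
    {M : AddSubmonoid G} {x : G} (hx : x ∈ AddSubgroup.closure (M : Set G)) :
    ∃ p ∈ M, ∃ q ∈ M, x = p - q := by
  induction hx using AddSubgroup.closure_induction with
  | mem x hx => exact ⟨x, hx, 0, M.zero_mem, (sub_zero x).symm⟩
  | zero => exact ⟨0, M.zero_mem, 0, M.zero_mem, (sub_zero 0).symm⟩
  | add x y _ _ ihx ihy =>
    obtain ⟨p, hp, q, hq, rfl⟩ := ihx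
    obtain ⟨p', hp', q', hq', rfl⟩ := ihy
    exact ⟨p + p', M.add_mem hp hp', q + q', M.add_mem hq hq', by abel⟩
  | neg x _ ihx =>
    obtain ⟨p, hp, q, hq, rfl⟩ := ihx
    exact ⟨q, hq, p, hp, neg_sub p q⟩

theorem Set.InjOn.of_singleton_add {M N : Type*} [AddMonoid M] [IsLeftCancelAdd M]
    [AddMonoid N] {f : M →+ N} {w : M} {s : Set M} (h : Set.InjOn f ({w} + s)) :
    Set.InjOn f s := by
  intro x hx y hy hxy
  refine add_left_cancel (h (Set.add_mem_add rfl hx) (Set.add_mem_add rfl hy) ?_)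
  rw [map_add, map_add, hxy]

theorem image_singleton_add_coe {M N : Type*} [AddMonoid M] [AddMonoid N] (f : M →+ N) (w : M)
    (P : AddSubmonoid M) : f '' ({w} + (P : Set M)) = {f w} + (P.map f : Set N) := by
  rw [Set.image_add, Set.image_singleton, AddSubmonoid.coe_map]

section CoordSubmonoid

variable {ι : Type*}

open Classical in
noncomputable def coordSubmonoid (S : Set ι) : AddSubmonoid (ι → ℕ) :=
  AddSubmonoid.pi Set.univ fun j => if j ∈ S then ⊤ else ⊥

theorem mem_coordSubmonoid {S : Set ι} {x : ι → ℕ} :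
    x ∈ coordSubmonoid S ↔ ∀ j ∉ S, x j = 0 := by
  simp only [coordSubmonoid, AddSubmonoid.mem_pi, Set.mem_univ, true_implies]
  refine forall_congr' fun j => ?_
  split_ifs with hj <;> simp [hj]

theorem coordSubmonoid_fg [Finite ι] (S : Set ι) : (coordSubmonoid S).FG :=
  AddSubmonoid.FG.pi fun j => by
    split_ifs
    exacts [AddMonoid.FG.fg_top, AddSubmonoid.FG.bot]

theorem mem_singleton_add_coordSubmonoid {S : Set ι} {w v : ι → ℕ} :
    v ∈ {w} + (coordSubmonoid S : Set (ι → ℕ)) ↔ w ≤ v ∧ ∀ j ∉ S, v j = w j := by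
  simp only [Set.singleton_add, Set.mem_image, SetLike.mem_coe, mem_coordSubmonoid]
  constructor
  · rintro ⟨x, hx, rfl⟩
    exact ⟨le_self_add, fun j hj => by simp [hx j hj]⟩
  · rintro ⟨hwv, hv⟩
    exact ⟨v - w, fun j hj => by simp [hv j hj], add_tsub_cancel_of_le hwv⟩

theorem singleton_add_coordSubmonoid_eq_inf_fiber {w b : ι → ℕ} (hwb : w ≤ b) :
    {w} + (coordSubmonoid {j | w j = b j} : Set (ι → ℕ)) = (· ⊓ b) ⁻¹' {w} := by
  ext v
  simp only [mem_singleton_add_coordSubmonoid, Set.mem_preimage, Set.mem_singleton_iff,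
    Set.mem_ofPred_eq, funext_iff, Pi.inf_apply, Pi.le_def, ← forall_and]
  refine forall_congr' fun j => ?_
  have : w j ≤ b j := hwb j
  omega

theorem IsLowerSet.exists_pairwise_disjoint_translates_coordSubmonoid [Finite ι]
    {D : Set (ι → ℕ)} (hD : IsLowerSet D) :
    ∃ (r : ℕ) (w : Fin r → ι → ℕ) (S : Fin r → Set ι),
      Pairwise (Disjoint on fun i => ({w i} + (coordSubmonoid (S i) : Set (ι → ℕ)))) ∧
      D = ⋃ i, {w i} + (coordSubmonoid (S i) : Set (ι → ℕ)) := by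
  classical
  have := Fintype.ofFinite ι
  obtain ⟨b, hb⟩ := hD.exists_inf_mem_iff
  let W := Set.Iic b ∩ D
  have : Finite W := ((Set.finite_Iic b).inter_of_left D).to_subtype
  let e := (Finite.equivFin W).symm
  have hfiber (i) : {(e i : ι → ℕ)} + (coordSubmonoid {j | (e i : ι → ℕ) j = b j} : Set _) =
      (· ⊓ b) ⁻¹' {(e i : ι → ℕ)} :=
    singleton_add_coordSubmonoid_eq_inf_fiber (e i).2.1
  refine ⟨_, fun i => e i, fun i => {j | (e i : ι → ℕ) j = b j}, fun i i' hii' => ?_, ?_⟩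
  · simp only [onFun, hfiber]
    exact Disjoint.preimage _ (Set.disjoint_singleton.mpr (Subtype.val_injective.ne
      (e.injective.ne hii')))
  · ext v
    simp only [Set.mem_iUnion, hfiber, Set.mem_preimage, Set.mem_singleton_iff]
    rw [← hb]
    constructor
    · intro hv
      exact ⟨e.symm ⟨v ⊓ b, Set.mem_Iic.mpr inf_le_right, hv⟩, by rw [Equiv.apply_symm_apply]⟩
    · rintro ⟨i, hi⟩
      exact hi ▸ (e i).2.2

end CoordSubmonoid

section LexLeastInFiber

variable {ι M : Type*} [LinearOrder ι] [AddMonoid M]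

def lexLeastInFiber (f : (ι → ℕ) →+ M) : Set (ι → ℕ) :=
  {u | ∀ v, f v = f u → toLex u ≤ toLex v}

theorem isLowerSet_lexLeastInFiber (f : (ι → ℕ) →+ M) : IsLowerSet (lexLeastInFiber f) := by
  intro u u' hle hu v hv
  obtain ⟨w, rfl⟩ := exists_add_of_le hle
  have : toLex u' + toLex w ≤ toLex v + toLex w := hu (v + w) (by rw [map_add, map_add, hv])
  exact le_of_add_le_add_right this

theorem injOn_lexLeastInFiber (f : (ι → ℕ) →+ M) : Set.InjOn f (lexLeastInFiber f) :=
  fun u hu u' hu' h => toLex.injective ((hu u' h.symm).antisymm (hu' u h))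

theorem image_lexLeastInFiber [Finite ι] (f : (ι → ℕ) →+ M) :
    f '' lexLeastInFiber f = Set.range f := by
  refine (Set.image_subset_range _ _).antisymm ?_
  rintro _ ⟨u, rfl⟩
  obtain ⟨m, hm, hmin⟩ := (wellFounded_lt (α := Lex (ι → ℕ))).has_min
    {l | f (ofLex l) = f u} ⟨toLex u, rfl⟩
  exact ⟨ofLex m, fun v hv => not_lt.mp (hmin (toLex v) (hv.trans hm)), hm⟩

end LexLeastInFiber

theorem mem_map_of_nsmul_mem_map {ι G : Type*} [AddCommGroup G] {N : AddSubmonoid (ι → ℕ)}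
    (hN : ∀ p ∈ N, ∀ q ∈ N, p - q ∈ N) {f : (ι → ℕ) →+ G} (hf : Set.InjOn f N) {n : ℕ}
    (hn : 0 < n) {x : G} (hx : x ∈ AddSubgroup.closure (N.map f : Set G))
    (hnx : n • x ∈ N.map f) : x ∈ N.map f := by
  obtain ⟨_, ⟨p, hp, rfl⟩, _, ⟨q, hq, rfl⟩, rfl⟩ := AddSubmonoid.exists_sub_of_mem_closure hx
  obtain ⟨m, hm, hfm⟩ := hnx
  have hpq : n • p = m + n • q := hf (N.nsmul_mem hp n) (N.add_mem hm (N.nsmul_mem hq n)) (by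
    rw [map_nsmul, map_add, map_nsmul, hfm, smul_sub, sub_add_cancel])
  have hqp : q ≤ p := fun j => by
    have := congrFun hpq j
    simp only [Pi.smul_apply, Pi.add_apply, smul_eq_mul] at this
    exact Nat.le_of_mul_le_mul_left (this ▸ Nat.le_add_left _ _) hn
  refine ⟨p - q, hN p hp q hq, ?_⟩
  rw [eq_sub_iff_add_eq, ← map_add, tsub_add_cancel_of_le hqp]

theorem isNormalAffineSemigroup_map_coordSubmonoid {ι : Type*} [Finite ι] {d : ℕ} {S : Set ι}
    {f : (ι → ℕ) →+ (Fin d → ℤ)} (hf : Set.InjOn f (coordSubmonoid S)) :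
    IsNormalAffineSemigroup ((coordSubmonoid S).map f) := by
  refine ⟨(coordSubmonoid_fg S).map f,
    fun n x hn hx hnx => mem_map_of_nsmul_mem_map ?_ hf hn hx hnx⟩
  intro p hp q _
  rw [mem_coordSubmonoid] at hp ⊢
  intro j hj
  rw [Pi.sub_apply, hp j hj, zero_tsub]

/-- Every affine semigroup `A ⊆ ℤ^d` is a finite disjoint union of translates
of normal affine semigroups. -/
theorem affine_semigroup_disjoint_union_of_normal {d : ℕ}
    (A : AddSubmonoid (Fin d → ℤ)) (hA : A.FG) :
    ∃ (r : ℕ) (f : Fin r → (Fin d → ℤ)) (N : Fin r → AddSubmonoid (Fin d → ℤ)),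
      (∀ i, IsNormalAffineSemigroup (N i)) ∧
      (Pairwise fun i j => Disjoint
        (({f i} : Set (Fin d → ℤ)) + (N i : Set (Fin d → ℤ)))
        (({f j} : Set (Fin d → ℤ)) + (N j : Set (Fin d → ℤ)))) ∧
      (A : Set (Fin d → ℤ)) = ⋃ i, (({f i} : Set (Fin d → ℤ)) + (N i : Set (Fin d → ℤ))) := by
  obtain ⟨k, φ, rfl⟩ := AddSubmonoid.fg_iff_exists_fin_addMonoidHom.mp hA
  obtain ⟨r, w, S, hdisj, hcover⟩ :=
    (isLowerSet_lexLeastInFiber φ).exists_pairwise_disjoint_translates_coordSubmonoid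
  have hinj := injOn_lexLeastInFiber φ
  have hsub (i) : {w i} + (coordSubmonoid (S i) : Set (Fin k → ℕ)) ⊆ lexLeastInFiber φ :=
    hcover ▸ Set.subset_iUnion (fun i => {w i} + (coordSubmonoid (S i) : Set (Fin k → ℕ))) i
  refine ⟨r, fun i => φ (w i), fun i => (coordSubmonoid (S i)).map φ, fun i => ?_,
    fun i j hij => ?_, ?_⟩
  · exact isNormalAffineSemigroup_map_coordSubmonoid (hinj.mono (hsub i)).of_singleton_add
  · simp only [← image_singleton_add_coe]
    exact (hdisj hij).image hinj (hsub i) (hsub j)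
  · rw [AddMonoidHom.coe_mrange, ← image_lexLeastInFiber, hcover, Set.image_iUnion]
    simp only [image_singleton_add_coe]
end

section
/- Any finite union of rational convex polyhedra in ℝ^d can be expressed as a disjoint union of finitely many sets, each of which is the relative interior of a rational convex polyhedron. -/
/-!
All the affine functionals defining the `P i` together cut space into the cells on which their
sign vector is constant. These cells partition space, and membership in `⋃ i, P i` only depends
on the sign vector. A nonempty cell is the relative interior of the polyhedron obtained by
relaxing its strict inequalities to non-strict ones, and that polyhedron is again rational.
-/

open Set Topology

/-- A rational convex polyhedron in `ℝ^d`: an intersection of finitely many closed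
halfspaces defined by linear functionals with rational coefficients and rational
constants. -/
def IsRatPolyhedron {d : ℕ} (S : Set (Fin d → ℝ)) : Prop :=
  ∃ (m : ℕ) (a : Fin m → (Fin d → ℚ)) (c : Fin m → ℚ),
    S = {x | ∀ i, (c i : ℝ) ≤ ∑ j, (a i j : ℝ) * x j}

lemma eventually_lineMap_mem_of_mem_intrinsicInterior {E : Type*} [AddCommGroup E] [Module ℝ E]
    [TopologicalSpace E] [IsTopologicalAddGroup E] [ContinuousSMul ℝ E] {s : Set E} {x y : E}
    (hx : x ∈ intrinsicInterior ℝ s) (hy : y ∈ s) :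
    ∀ᶠ t in 𝓝 (1 : ℝ), AffineMap.lineMap y x t ∈ s := by
  obtain ⟨⟨x, hx_span⟩, hx_int, rfl⟩ := mem_intrinsicInterior.1 hx
  let g : ℝ → affineSpan ℝ s := fun t =>
    ⟨AffineMap.lineMap y x t, AffineMap.lineMap_mem t (subset_affineSpan ℝ s hy) hx_span⟩
  have hg : Continuous g := AffineMap.lineMap_continuous.subtype_mk _
  have hg1 : g 1 = ⟨x, hx_span⟩ := Subtype.ext (AffineMap.lineMap_apply_one y x)
  exact (hg.tendsto 1).eventually (hg1 ▸ isOpen_interior.mem_nhds hx_int) |>.mono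
    fun _ ht => interior_subset (s := ((↑) : affineSpan ℝ s → E) ⁻¹' s) ht

lemma isOpen_setOf_sign_eq {e : SignType} (he : e ≠ 0) :
    IsOpen {r : ℝ | SignType.sign r = e} := by
  cases e
  · exact absurd rfl he
  · rw [show {r : ℝ | SignType.sign r = .neg} = Iio 0 from ext fun _ => sign_eq_neg_one_iff]
    exact isOpen_Iio
  · rw [show {r : ℝ | SignType.sign r = .pos} = Ioi 0 from ext fun _ => sign_eq_one_iff]
    exact isOpen_Ioi

lemma sign_eq_of_sign_lineMap {a b t : ℝ} (ht : 1 < t)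
    (hb : SignType.sign b = 0 ∨ SignType.sign b = SignType.sign a)
    (hab : SignType.sign (AffineMap.lineMap a b t) = 0 ∨
      SignType.sign (AffineMap.lineMap a b t) = SignType.sign a) :
    SignType.sign b = SignType.sign a := by
  rcases hb with hb | hb
  · rw [sign_eq_zero_iff] at hb
    subst hb
    rw [AffineMap.lineMap_apply_ring, mul_zero, add_zero, sign_mul,
      sign_neg (by linarith : 1 - t < 0)] at hab
    rcases h : SignType.sign a <;> simp_all
  · exact hb

section SignCells

variable {ι E : Type*} [AddCommGroup E] [Module ℝ E] [TopologicalSpace E]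

noncomputable def signVector (f : ι → E →ᴬ[ℝ] ℝ) (x : E) : ι → SignType :=
  fun i => SignType.sign (f i x)

def closedSignCell (f : ι → E →ᴬ[ℝ] ℝ) (ε : ι → SignType) : Set E :=
  {x | ∀ i, SignType.sign (f i x) = 0 ∨ SignType.sign (f i x) = ε i}

variable (f : ι → E →ᴬ[ℝ] ℝ)

lemma preimage_signVector_subset_closedSignCell (ε : ι → SignType) :
    signVector f ⁻¹' {ε} ⊆ closedSignCell f ε :=
  fun _ hx i => Or.inr (congrFun hx i)

lemma preimage_signVector_subset_intrinsicInterior [Finite ι] (ε : ι → SignType) :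
    signVector f ⁻¹' {ε} ⊆ intrinsicInterior ℝ (closedSignCell f ε) := by
  intro x hx
  let U : Set E := ⋂ i, {y | ε i ≠ 0 → SignType.sign (f i y) = ε i}
  have hU : IsOpen U := by
    refine isOpen_iInter_of_finite fun i => ?_
    by_cases hi : ε i = 0
    · simp [hi]
    · simpa [hi] using (isOpen_setOf_sign_eq hi).preimage (f i).continuous
  have hvanish : ∀ i, ε i = 0 → ∀ y ∈ affineSpan ℝ (closedSignCell f ε), f i y = 0 :=
    fun i hi => AffineMap.eqOn_affineSpan (f := (f i : E →ᵃ[ℝ] ℝ))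
      (g := AffineMap.const ℝ E 0) fun z hz => by simpa [hi] using hz i
  refine mem_intrinsicInterior.2 ⟨⟨x, subset_affineSpan ℝ _
    (preimage_signVector_subset_closedSignCell f ε hx)⟩, ?_, rfl⟩
  refine interior_maximal ?_ (hU.preimage continuous_subtype_val)
    (mem_iInter.2 fun i _ => congrFun hx i)
  rintro ⟨y, hy⟩ hyU i
  by_cases hi : ε i = 0
  · exact Or.inl (by simp [hvanish i hi y hy])
  · exact Or.inr (mem_iInter.1 hyU i hi)

variable [IsTopologicalAddGroup E] [ContinuousSMul ℝ E]

lemma intrinsicInterior_closedSignCell_subset {ε : ι → SignType}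
    (hε : (signVector f ⁻¹' {ε}).Nonempty) :
    intrinsicInterior ℝ (closedSignCell f ε) ⊆ signVector f ⁻¹' {ε} := by
  obtain ⟨y, hy⟩ := hε
  have hyε : ∀ i, SignType.sign (f i y) = ε i := congrFun hy
  intro x hx
  -- Continuing the segment from `y` slightly beyond `x` stays in the closed cell, so a functional
  -- that is nonzero at `y` cannot vanish at `x`.
  obtain ⟨t, hxt, ht⟩ := ((eventually_nhdsWithin_of_eventually_nhds
    (eventually_lineMap_mem_of_mem_intrinsicInterior hx
      (preimage_signVector_subset_closedSignCell f ε hy))).and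
        (self_mem_nhdsWithin : Ioi (1 : ℝ) ∈ 𝓝[>] 1)).exists
  funext i
  rw [← hyε i]
  refine sign_eq_of_sign_lineMap ht ?_ ?_
  · rw [hyε i]; exact intrinsicInterior_subset hx i
  · rw [← ContinuousAffineMap.apply_lineMap, hyε i]; exact hxt i

lemma intrinsicInterior_closedSignCell [Finite ι] {ε : ι → SignType}
    (hε : (signVector f ⁻¹' {ε}).Nonempty) :
    intrinsicInterior ℝ (closedSignCell f ε) = signVector f ⁻¹' {ε} :=
  (intrinsicInterior_closedSignCell_subset f hε).antisymm
    (preimage_signVector_subset_intrinsicInterior f ε)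

lemma exists_pairwise_disjoint_iUnion_intrinsicInterior_closedSignCell [Finite ι]
    (T : Set (ι → SignType)) :
    ∃ (r : ℕ) (ε : Fin r → ι → SignType),
      (Pairwise fun j k => Disjoint (intrinsicInterior ℝ (closedSignCell f (ε j)))
        (intrinsicInterior ℝ (closedSignCell f (ε k)))) ∧
      signVector f ⁻¹' T = ⋃ j, intrinsicInterior ℝ (closedSignCell f (ε j)) := by
  let J := ↥(T ∩ range (signVector f))
  let e : Fin (Nat.card J) ≃ J := (Finite.equivFin J).symm
  have hcell : ∀ j,
      intrinsicInterior ℝ (closedSignCell f (e j)) = signVector f ⁻¹' {(e j).1} :=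
    fun j => intrinsicInterior_closedSignCell f (preimage_singleton_nonempty.2 (e j).2.2)
  refine ⟨Nat.card J, fun j => e j, fun j k hjk => ?_, ?_⟩
  · dsimp only
    rw [hcell, hcell]
    exact (disjoint_singleton.2 fun h => hjk (e.injective (Subtype.ext h))).preimage _
  · simp only [hcell]
    rw [e.surjective.iUnion_comp (fun ε : J => signVector f ⁻¹' {ε.1}), iUnion_subtype,
      biUnion_preimage_singleton, preimage_inter_range]

end SignCells

section Rational

variable {d : ℕ}

noncomputable def ratAffine (a : Fin d → ℚ) (c : ℚ) : (Fin d → ℝ) →ᴬ[ℝ] ℝ :=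
  (∑ j, (a j : ℝ) • ContinuousLinearMap.proj j).toContinuousAffineMap -
    ContinuousAffineMap.const ℝ _ (c : ℝ)

@[simp]
lemma ratAffine_apply (a : Fin d → ℚ) (c : ℚ) (x : Fin d → ℝ) :
    ratAffine a c x = ∑ j, (a j : ℝ) * x j - c := by
  simp [ratAffine]

lemma ratAffine_neg_apply (a : Fin d → ℚ) (c : ℚ) (x : Fin d → ℝ) :
    ratAffine (-a) (-c) x = -ratAffine a c x := by
  simp only [ratAffine_apply, Pi.neg_apply, Rat.cast_neg, neg_mul, Finset.sum_neg_distrib]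
  ring

lemma IsRatPolyhedron.of_finite {κ : Type*} [Finite κ] (a : κ → Fin d → ℚ) (c : κ → ℚ) :
    IsRatPolyhedron {x : Fin d → ℝ | ∀ k, (c k : ℝ) ≤ ∑ j, (a k j : ℝ) * x j} := by
  let e := (Finite.equivFin κ).symm
  exact ⟨Nat.card κ, a ∘ e, c ∘ e, ext fun x => e.forall_congr_right.symm⟩

lemma IsRatPolyhedron.iInter {ι : Type*} [Finite ι] {S : ι → Set (Fin d → ℝ)}
    (hS : ∀ i, IsRatPolyhedron (S i)) : IsRatPolyhedron (⋂ i, S i) := by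
  choose m a c hS using hS
  convert IsRatPolyhedron.of_finite (fun p : Σ i, Fin (m i) => a p.1 p.2) (fun p => c p.1 p.2)
  ext x
  simp [hS, Sigma.forall]

lemma IsRatPolyhedron.inter {S T : Set (Fin d → ℝ)} (hS : IsRatPolyhedron S)
    (hT : IsRatPolyhedron T) : IsRatPolyhedron (S ∩ T) :=
  inter_eq_iInter ▸ IsRatPolyhedron.iInter (Bool.forall_bool.2 ⟨hT, hS⟩)

lemma isRatPolyhedron_setOf_nonneg (a : Fin d → ℚ) (c : ℚ) :
    IsRatPolyhedron {x | 0 ≤ ratAffine a c x} :=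
  ⟨1, fun _ => a, fun _ => c, by ext; simp⟩

lemma isRatPolyhedron_setOf_sign (a : Fin d → ℚ) (c : ℚ) (e : SignType) :
    IsRatPolyhedron
      {x | SignType.sign (ratAffine a c x) = 0 ∨ SignType.sign (ratAffine a c x) = e} := by
  have hneg := isRatPolyhedron_setOf_nonneg (-a) (-c)
  simp only [ratAffine_neg_apply, neg_nonneg] at hneg
  cases e <;>
    [convert (isRatPolyhedron_setOf_nonneg a c).inter hneg using 1; convert hneg using 1;
      convert isRatPolyhedron_setOf_nonneg a c using 1] <;>
    ext x <;>
    simp only [mem_ofPred_eq, mem_inter_iff] <;>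
    generalize ratAffine a c x = r <;>
    (rcases lt_trichotomy r 0 with h | rfl | h <;>
      [simp [sign_neg h, h.le, h.not_ge]; simp; simp [sign_pos h, h.le, h.not_ge]])

lemma isRatPolyhedron_closedSignCell {ι : Type*} [Finite ι] (a : ι → Fin d → ℚ) (c : ι → ℚ)
    (ε : ι → SignType) :
    IsRatPolyhedron (closedSignCell (fun i => ratAffine (a i) (c i)) ε) := by
  convert IsRatPolyhedron.iInter fun i => isRatPolyhedron_setOf_sign (a i) (c i) (ε i)
  ext x
  simp [closedSignCell]

end Rational

/-- Any finite union of rational convex polyhedra in `ℝ^d` is a disjoint union of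
finitely many sets, each the relative (intrinsic) interior of a rational convex
polyhedron. -/
theorem finite_union_polyhedra_eq_disjoint_union_relint {d n : ℕ}
    (P : Fin n → Set (Fin d → ℝ)) (hP : ∀ i, IsRatPolyhedron (P i)) :
    ∃ (r : ℕ) (Q : Fin r → Set (Fin d → ℝ)),
      (∀ j, IsRatPolyhedron (Q j)) ∧
      (Pairwise fun j k => Disjoint (intrinsicInterior ℝ (Q j)) (intrinsicInterior ℝ (Q k))) ∧
      (⋃ i, P i) = ⋃ j, intrinsicInterior ℝ (Q j) := by
  choose m a c hP using hP
  let f : (Σ i, Fin (m i)) → (Fin d → ℝ) →ᴬ[ℝ] ℝ := fun p => ratAffine (a p.1 p.2) (c p.1 p.2)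
  let T : Set ((Σ i, Fin (m i)) → SignType) := {ε | ∃ i, ∀ k, ε ⟨i, k⟩ ≠ -1}
  have hunion : (⋃ i, P i) = signVector f ⁻¹' T := by
    ext x
    simp [hP, T, signVector, f, sign_eq_neg_one_iff]
  obtain ⟨r, ε, hdisj, hcover⟩ :=
    exists_pairwise_disjoint_iUnion_intrinsicInterior_closedSignCell f T
  exact ⟨r, fun j => closedSignCell f (ε j),
    fun j => isRatPolyhedron_closedSignCell _ _ (ε j), hdisj, hunion.trans hcover⟩
end

section
/- Let Π = P + C ⊆ ℝ^d be a rational convex polyhedron expressed as the Minkowski sum of a rational polytope P (the convex hull of finitely many rational points) and a rational polyhedral cone C (the cone generated by finitely many rational vectors), and let A = C ∩ ℤ^d. Then Π ∩ ℤ^d is a finitely generated module over the monoid A; that is, there exists a finite set F ⊆ ℤ^d such that Π ∩ ℤ^d = F + A. -/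
open Pointwise Set

/-!
Clearing denominators, `N • vᵢ` are integer vectors `wᵢ` in `C`. Writing a point of `P + C` as
`q + ∑ cᵢ • vᵢ` and dividing each `cᵢ` by `N` with remainder splits an integer point `x` of
`P + C` as `r + ∑ ⌊cᵢ / N⌋ • wᵢ`, where `r` is an integer point of the compact set
`P + {∑ tᵢ • vᵢ | tᵢ ∈ [0, N]} ⊆ P + C`. These finitely many `r` form `F`; conversely
`F + A ⊆ P + C + C = P + C`.
-/

lemma exists_pos_nat_mul_eq_intCast {ι : Type*} [Fintype ι] (q : ι → ℚ) :
    ∃ N : ℕ, 0 < N ∧ ∀ i, ∃ z : ℤ, (z : ℚ) = N * q i := by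
  refine ⟨∏ i, (q i).den, Finset.prod_pos fun i _ => (q i).pos, fun i => ?_⟩
  obtain ⟨c, hc⟩ := Finset.dvd_prod_of_mem (fun i => (q i).den) (Finset.mem_univ i)
  refine ⟨(q i).num * c, ?_⟩
  rw [hc]
  push_cast
  rw [← (q i).mul_den_eq_num]
  ring

section ConicHull

variable {ι E : Type*} [Fintype ι] [AddCommGroup E] [Module ℝ E]

def conicHull (v : ι → E) : Set E :=
  {x | ∃ c : ι → ℝ, (∀ i, 0 ≤ c i) ∧ x = ∑ i, c i • v i}

def conicHullIcc (v : ι → E) (N : ℝ) : Set E :=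
  (fun t => ∑ i, t i • v i) '' univ.pi fun _ => Icc 0 N

lemma add_mem_conicHull {v : ι → E} {x y : E} (hx : x ∈ conicHull v) (hy : y ∈ conicHull v) :
    x + y ∈ conicHull v := by
  obtain ⟨c, hc, rfl⟩ := hx
  obtain ⟨c', hc', rfl⟩ := hy
  exact ⟨c + c', fun i => add_nonneg (hc i) (hc' i), by
    simp only [Pi.add_apply, add_smul, Finset.sum_add_distrib]⟩

lemma add_conicHull_add_conicHull_subset (S : Set E) (v : ι → E) :
    S + conicHull v + conicHull v ⊆ S + conicHull v := by
  rw [add_assoc]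
  exact add_subset_add_left fun _ ⟨x, hx, y, hy, hxy⟩ => hxy ▸ add_mem_conicHull hx hy

lemma conicHullIcc_subset_conicHull (v : ι → E) (N : ℝ) : conicHullIcc v N ⊆ conicHull v := by
  rintro _ ⟨t, ht, rfl⟩
  exact ⟨t, fun i => (ht i (mem_univ i)).1, rfl⟩

lemma exists_eq_add_nat_mul_smul_of_mem_conicHull {v : ι → E} {x : E} (hx : x ∈ conicHull v)
    {N : ℝ} (hN : 0 < N) :
    ∃ s ∈ conicHullIcc v N,
      ∃ n : ι → ℕ, x = s + ∑ i, (n i : ℝ) • N • v i := by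
  obtain ⟨c, hc, rfl⟩ := hx
  set n : ι → ℕ := fun i => ⌊c i / N⌋₊
  have hn_le : ∀ i, n i * N ≤ c i := fun i =>
    (le_div_iff₀ hN).mp (Nat.floor_le (div_nonneg (hc i) hN.le))
  have hlt_n : ∀ i, c i < (n i + 1) * N := fun i =>
    (div_lt_iff₀ hN).mp (Nat.lt_floor_add_one _)
  refine ⟨_, ⟨fun i => c i - n i * N, fun i _ => ⟨?_, ?_⟩, rfl⟩, n, ?_⟩
  · linarith [hn_le i]
  · linarith [hlt_n i]
  · simp only [← Finset.sum_add_distrib, smul_smul, ← add_smul, sub_add_cancel]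

end ConicHull

lemma isCompact_conicHullIcc {ι E : Type*} [Fintype ι] [NormedAddCommGroup E]
    [NormedSpace ℝ E] (v : ι → E) (N : ℝ) : IsCompact (conicHullIcc v N) :=
  (isCompact_univ_pi fun _ => isCompact_Icc).image (by fun_prop)

lemma finite_setOf_intCast_mem_of_isBounded {κ : Type*} [Fintype κ] {B : Set (κ → ℝ)}
    (hB : Bornology.IsBounded B) : {x : κ → ℤ | (fun j => (x j : ℝ)) ∈ B}.Finite := by
  classical
  obtain ⟨R, hR⟩ := hB.subset_closedBall 0
  refine (Set.finite_Icc (fun _ => -⌈R⌉) (fun _ => ⌈R⌉)).subset fun x hx => ?_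
  have hxR : ∀ j, |(x j : ℝ)| ≤ ⌈R⌉ := fun j =>
    (norm_le_pi_norm (fun j => (x j : ℝ)) j).trans
      ((mem_closedBall_zero_iff.mp (hR hx)).trans (Int.le_ceil R))
  exact ⟨fun j => by exact_mod_cast (abs_le.mp (hxR j)).1,
    fun j => by exact_mod_cast (abs_le.mp (hxR j)).2⟩

lemma exists_eq_add_of_intCast_mem_add_conicHull {κ ι : Type*} [Fintype κ] [Fintype ι]
    {S : Set (κ → ℝ)} {u : ι → κ → ℝ} {N : ℝ} (hN : 0 < N) {w : ι → κ → ℤ}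
    (hw : ∀ i, (fun j => (w i j : ℝ)) = N • u i) {x : κ → ℤ}
    (hx : (fun j => (x j : ℝ)) ∈ S + conicHull u) :
    ∃ r z : κ → ℤ, x = r + z ∧
      (fun j => (r j : ℝ)) ∈ S + conicHullIcc u N ∧
      (fun j => (z j : ℝ)) ∈ conicHull u := by
  obtain ⟨q, hq, c, hc, hqc⟩ := hx
  obtain ⟨s, hs, n, rfl⟩ := exists_eq_add_nat_mul_smul_of_mem_conicHull hc hN
  set z : κ → ℤ := ∑ i, (n i : ℤ) • w i
  have hz : (fun j => (z j : ℝ)) = ∑ i, (n i : ℝ) • N • u i := by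
    simp only [z, ← hw]
    ext j
    simp [Finset.sum_apply]
  refine ⟨x - z, z, (sub_add_cancel x z).symm, ⟨q, hq, s, hs, ?_⟩, ?_⟩
  · have hxz : (fun j => (x j : ℝ)) = q + s + fun j => (z j : ℝ) := by
      rw [hz, add_assoc]
      exact hqc.symm
    ext j
    simp [congrFun hxz j]
  · rw [hz]
    exact ⟨fun i => n i * N, fun i => by positivity, by simp only [smul_smul]⟩

/-- If `Π = P + C ⊆ ℝ^d` is a rational convex polyhedron, expressed as the Minkowski
sum of a rational polytope `P` (convex hull of finitely many rational points) and a
rational polyhedral cone `C` (cone generated by finitely many rational vectors), then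
`Π ∩ ℤ^d` is a finitely generated module over the monoid `A = C ∩ ℤ^d`: there is a
finite set `F ⊆ ℤ^d` with `Π ∩ ℤ^d = F + A`. -/
theorem polyhedron_lattice_points_fg_module {d m k : ℕ}
    (p : Fin m → (Fin d → ℚ)) (v : Fin k → (Fin d → ℚ))
    (P C Pl : Set (Fin d → ℝ))
    (hP : P = convexHull ℝ (Set.range fun i => fun j => ((p i j : ℝ))))
    (hC : C = {x | ∃ c : Fin k → ℝ, (∀ i, 0 ≤ c i) ∧
      x = ∑ i, c i • fun j => ((v i j : ℝ))})
    (hPl : Pl = P + C) :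
    ∃ F : Finset (Fin d → ℤ),
      {x : Fin d → ℤ | (fun j => (x j : ℝ)) ∈ Pl} =
        (F : Set (Fin d → ℤ)) + {x : Fin d → ℤ | (fun j => (x j : ℝ)) ∈ C} := by
  set u : Fin k → Fin d → ℝ := fun i j => (v i j : ℝ)
  replace hC : C = conicHull u := hC
  subst hC hPl
  obtain ⟨N, hN, hNv⟩ := exists_pos_nat_mul_eq_intCast fun ij : Fin k × Fin d => v ij.1 ij.2
  choose w hw using hNv
  have hwu : ∀ i, (fun j => (w (i, j) : ℝ)) = (N : ℝ) • u i := fun i => by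
    ext j
    simpa [u] using congrArg (fun q : ℚ => (q : ℝ)) (hw (i, j))
  have hPcompact : IsCompact P := by
    rw [hP]
    exact (finite_range _).isCompact_convexHull ℝ
  have hbounded : Bornology.IsBounded (P + conicHullIcc u N) :=
    (hPcompact.add (isCompact_conicHullIcc u N)).isBounded
  have hfin := finite_setOf_intCast_mem_of_isBounded hbounded
  refine ⟨hfin.toFinset, Subset.antisymm ?_ ?_⟩
  · intro x hx
    obtain ⟨r, z, rfl, hr, hz⟩ :=
      exists_eq_add_of_intCast_mem_add_conicHull (by exact_mod_cast hN) hwu hx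
    exact ⟨r, hfin.mem_toFinset.mpr hr, z, hz, rfl⟩
  · rintro _ ⟨f, hf, a, ha, rfl⟩
    have hf' : (fun j => (f j : ℝ)) ∈ P + conicHull u :=
      add_subset_add_left (conicHullIcc_subset_conicHull u N) (hfin.mem_toFinset.mp hf)
    exact add_conicHull_add_conicHull_subset P u ⟨_, hf', _, ha, by ext; simp⟩
end

section
/- Suppose W ⊆ ℤ^d is a finite union of sets Wᵢ, each of which is a translate of a normal affine semigroup Aᵢ = (ℝ₊Aᵢ) ∩ Lᵢ for some subgroup Lᵢ ⊆ ℤ^d. Then there exist a single subgroup L ⊆ ℤ^d of finite index, finitely many rational polyhedral cones σⱼ ⊆ ℝ^d, and vectors fⱼ ∈ ℤ^d such that W = ⋃ⱼ (fⱼ + (σⱼ ∩ L)); that is, W can be expressed as a finite union of translates of normal affine semigroups all defined with respect to the same finite-index sublattice L of ℤ^d. -/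
/-!
Fix a piece `σ ∩ L` and let `V ⊆ ℝ^d` be the real span of `L`. Being rational, `V` is cut out by
finitely many rational linear forms; since `hull S ∩ ker ℓ` is generated by the `s ∈ S` with
`ℓ s = 0` together with the vectors `ℓ s • t - ℓ t • s` for `ℓ s > 0 > ℓ t` (Fourier–Motzkin),
`σ ∩ V` is again a rational polyhedral cone, and `σ ∩ L = (σ ∩ V) ∩ L`. As `L` has finite index
in the group of integer points of `V`, some `mℤ^d` meets that group only inside `L`. Hence for
every finite-index `Λ ⊆ mℤ^d`, `σ ∩ L` is the union, over finitely many representatives `c ∈ L`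
of `L` mod `Λ`, of the integer points of `σ ∩ V` congruent to `c` mod `Λ`. Generating `σ ∩ V` by
vectors `vᵢ ∈ Λ`, each such point `x = ∑ tᵢ vᵢ` is `∑ ⌊tᵢ⌋ vᵢ ∈ (σ ∩ V) ∩ Λ` plus an integer point
of the bounded parallelepiped `{∑ sᵢ vᵢ | 0 ≤ sᵢ < 1}` in the same class, so each class is a finite
union of translates of `(σ ∩ V) ∩ Λ`. Finally, `Λ` is the intersection of the lattices obtained
for all the pieces.
-/

open Pointwise

/-- A rational polyhedral cone in `ℝ^d`: the set of nonnegative real combinations of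
finitely many rational vectors. -/
def IsRatPolyhedralCone {d : ℕ} (σ : Set (Fin d → ℝ)) : Prop :=
  ∃ (m : ℕ) (v : Fin m → (Fin d → ℚ)),
    σ = {x | ∃ c : Fin m → ℝ, (∀ i, 0 ≤ c i) ∧ x = ∑ i, c i • fun j => ((v i j : ℝ))}

namespace PointedCone

section OrderedSemiring

variable {R E : Type*} [Semiring R] [PartialOrder R] [IsOrderedRing R] [AddCommMonoid E]
  [Module R E]

theorem mem_hull_range_iff {ι : Type*} [Fintype ι] {v : ι → E} {x : E} :
    x ∈ hull R (Set.range v) ↔ ∃ c : ι → R, (∀ i, 0 ≤ c i) ∧ ∑ i, c i • v i = x := by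
  rw [Submodule.mem_span_range_iff_exists_fun]
  constructor
  · rintro ⟨c, rfl⟩
    exact ⟨fun i => c i, fun i => (c i).2, by simp only [Nonneg.coe_smul]⟩
  · rintro ⟨c, hc, rfl⟩
    exact ⟨fun i => ⟨c i, hc i⟩, by simp only [← Nonneg.coe_smul]⟩

end OrderedSemiring

section CommRing

variable {R M : Type*} [CommRing R] [AddCommGroup M] [Module R M]

def fourierMotzkinPair (ℓ : M →ₗ[R] R) : M →ₗ[R] M →ₗ[R] M :=
  LinearMap.mk₂ R (fun x y => ℓ x • y - ℓ y • x)
    (fun x x' y => by simp only [map_add]; module)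
    (fun c x y => by simp only [map_smul, smul_eq_mul]; module)
    (fun x y y' => by simp only [map_add]; module)
    (fun c x y => by simp only [map_smul, smul_eq_mul]; module)

@[simp] theorem fourierMotzkinPair_apply (ℓ : M →ₗ[R] R) (x y : M) :
    fourierMotzkinPair ℓ x y = ℓ x • y - ℓ y • x :=
  rfl

theorem map_fourierMotzkinPair (ℓ : M →ₗ[R] R) (x y : M) : ℓ (fourierMotzkinPair ℓ x y) = 0 := by
  simp [mul_comm]

end CommRing

variable {𝕜 M N P : Type*} [Field 𝕜] [LinearOrder 𝕜]
  [AddCommGroup M] [Module 𝕜 M] [AddCommGroup N] [Module 𝕜 N] [AddCommGroup P] [Module 𝕜 P]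

def fourierMotzkinGens (ℓ : M →ₗ[𝕜] 𝕜) (S : Set M) : Set M :=
  {x ∈ S | ℓ x = 0} ∪
    Set.image2 (fun x y => fourierMotzkinPair ℓ x y) {x ∈ S | 0 < ℓ x} {y ∈ S | ℓ y < 0}

theorem finite_fourierMotzkinGens (ℓ : M →ₗ[𝕜] 𝕜) {S : Set M} (hS : S.Finite) :
    (fourierMotzkinGens ℓ S).Finite :=
  (hS.sep _).union ((hS.sep _).image2 _ (hS.sep _))

variable [IsStrictOrderedRing 𝕜]

theorem hull_le_hull_of_forall_exists_smul_mem {S T : Set M}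
    (h : ∀ s ∈ S, ∃ c : 𝕜, 0 < c ∧ c • s ∈ T) : hull 𝕜 S ≤ hull 𝕜 T := by
  refine Submodule.span_le.2 fun s hs => ?_
  obtain ⟨c, hc, hcs⟩ := h s hs
  have := (hull 𝕜 T).smul_mem (inv_nonneg.2 hc.le) (subset_hull hcs)
  rwa [inv_smul_smul₀ hc.ne'] at this

theorem map_nonneg_of_mem_hull (ℓ : M →ₗ[𝕜] 𝕜) {S : Set M} (hS : ∀ s ∈ S, 0 ≤ ℓ s) {a : M}
    (ha : a ∈ hull 𝕜 S) : 0 ≤ ℓ a := by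
  induction ha using Submodule.span_induction with
  | mem x hx => exact hS x hx
  | zero => simp
  | add x y _ _ hx hy => rw [map_add]; exact add_nonneg hx hy
  | smul r x _ hx => rw [LinearMap.map_smul_of_tower, ← Nonneg.coe_smul]; exact smul_nonneg r.2 hx

theorem eq_zero_of_mem_hull_of_map_eq_zero (ℓ : M →ₗ[𝕜] 𝕜) {S : Set M} (hS : ∀ s ∈ S, 0 < ℓ s)
    {a : M} (ha : a ∈ hull 𝕜 S) (h : ℓ a = 0) : a = 0 := by
  have hnonneg := fun x (hx : x ∈ hull 𝕜 S) =>
    map_nonneg_of_mem_hull ℓ (fun s hs => (hS s hs).le) hx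
  induction ha using Submodule.span_induction with
  | mem x hx => exact absurd h (hS x hx).ne'
  | zero => rfl
  | add x y hxS hyS hx hy =>
    rw [map_add] at h
    have := hnonneg x hxS
    have := hnonneg y hyS
    rw [hx (by linarith), hy (by linarith), add_zero]
  | smul r x _ hx =>
    rw [← Nonneg.coe_smul] at h ⊢
    rw [map_smul, smul_eq_mul] at h
    rcases mul_eq_zero.1 h with hr | hx0
    · rw [hr, zero_smul]
    · rw [hx hx0, smul_zero]

theorem apply₂_mem_of_mem_hull (β : M →ₗ[𝕜] N →ₗ[𝕜] P) {S : Set M} {T : Set N}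
    {C : PointedCone 𝕜 P} (h : ∀ s ∈ S, ∀ t ∈ T, β s t ∈ C) {a : M} {b : N}
    (ha : a ∈ hull 𝕜 S) (hb : b ∈ hull 𝕜 T) : β a b ∈ C := by
  have hS : ∀ s ∈ S, β s b ∈ C := fun s hs => by
    induction hb using Submodule.span_induction with
    | mem t ht => exact h s hs t ht
    | zero => simp
    | add x y _ _ hx hy => rw [map_add]; exact C.add_mem hx hy
    | smul r x _ hx => rw [LinearMap.map_smul_of_tower]; exact Submodule.smul_mem C r hx
  induction ha using Submodule.span_induction with
  | mem s hs => exact hS s hs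
  | zero => simp
  | add x y _ _ hx hy => rw [map_add, LinearMap.add_apply]; exact C.add_mem hx hy
  | smul r x _ hx =>
    rw [← Nonneg.coe_smul, map_smul, LinearMap.smul_apply, Nonneg.coe_smul]
    exact Submodule.smul_mem C r hx

theorem exists_add_add_eq_of_mem_hull (ℓ : M →ₗ[𝕜] 𝕜) {S : Set M} {x : M} (hx : x ∈ hull 𝕜 S) :
    ∃ z ∈ hull 𝕜 {s ∈ S | ℓ s = 0}, ∃ a ∈ hull 𝕜 {s ∈ S | 0 < ℓ s},
      ∃ b ∈ hull 𝕜 {s ∈ S | ℓ s < 0}, z + a + b = x := by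
  have hS : S = ({s ∈ S | ℓ s = 0} ∪ {s ∈ S | 0 < ℓ s}) ∪ {s ∈ S | ℓ s < 0} := by
    ext s
    refine ⟨fun hs => ?_, by rintro ((h | h) | h) <;> exact h.1⟩
    rcases lt_trichotomy (ℓ s) 0 with h | h | h
    exacts [Or.inr ⟨hs, h⟩, Or.inl (Or.inl ⟨hs, h⟩), Or.inl (Or.inr ⟨hs, h⟩)]
  rw [hS] at hx
  simp only [hull, Submodule.span_union] at hx
  obtain ⟨y, hy, b, hb, rfl⟩ := Submodule.mem_sup.1 hx
  obtain ⟨z, hz, a, ha, rfl⟩ := Submodule.mem_sup.1 hy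
  exact ⟨z, hz, a, ha, b, hb, rfl⟩

theorem hull_inter_ker_subset (ℓ : M →ₗ[𝕜] 𝕜) (S : Set M) :
    (hull 𝕜 S : Set M) ∩ LinearMap.ker ℓ ⊆ hull 𝕜 (fourierMotzkinGens ℓ S) := by
  rintro _ ⟨hx, hℓx⟩
  obtain ⟨z, hz, a, ha, b, hb, rfl⟩ := exists_add_add_eq_of_mem_hull ℓ hx
  have hzC : z ∈ hull 𝕜 (fourierMotzkinGens ℓ S) := Submodule.span_mono Set.subset_union_left hz
  have hz0 : ℓ z = 0 := (Submodule.span_le (p := (LinearMap.ker ℓ).restrictScalars _)).2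
    (fun s hs => hs.2) hz
  have hb0 : ℓ b = -ℓ a := by
    rw [SetLike.mem_coe, LinearMap.mem_ker, map_add, map_add, hz0] at hℓx
    linarith
  rcases (map_nonneg_of_mem_hull ℓ (fun s hs => hs.2.le) ha).eq_or_lt with ha0 | ha0
  · rw [eq_zero_of_mem_hull_of_map_eq_zero ℓ (fun s hs => hs.2) ha ha0.symm,
      eq_zero_of_mem_hull_of_map_eq_zero (-ℓ) (fun s hs => by simpa using hs.2) hb
        (by simp [hb0, ← ha0]), add_zero, add_zero]
    exact hzC
  · -- `a + b` is a positive multiple of `fourierMotzkinPair ℓ a b`, which is bilinear in `a, b`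
    have hab : a + b = (ℓ a)⁻¹ • fourierMotzkinPair ℓ a b := by
      rw [fourierMotzkinPair_apply, hb0, neg_smul, sub_neg_eq_add, smul_add, smul_smul, smul_smul,
        inv_mul_cancel₀ ha0.ne', one_smul, one_smul, add_comm]
    rw [add_assoc, hab]
    refine add_mem hzC ((hull 𝕜 _).smul_mem (inv_nonneg.2 ha0.le)
      (apply₂_mem_of_mem_hull _ (fun p hp n hn => ?_) ha hb))
    exact subset_hull (Or.inr ⟨p, hp, n, hn, rfl⟩)

theorem hull_fourierMotzkinGens_le (ℓ : M →ₗ[𝕜] 𝕜) (S : Set M) :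
    hull 𝕜 (fourierMotzkinGens ℓ S) ≤ hull 𝕜 S ⊓ (LinearMap.ker ℓ).restrictScalars _ := by
  refine Submodule.span_le.2 ?_
  rintro _ (⟨hx, hx0⟩ | ⟨p, hp, n, hn, rfl⟩)
  · exact ⟨subset_hull hx, hx0⟩
  · refine ⟨?_, map_fourierMotzkinPair ℓ p n⟩
    dsimp only
    rw [fourierMotzkinPair_apply, sub_eq_add_neg, ← neg_smul]
    exact add_mem ((hull 𝕜 S).smul_mem hp.2.le (subset_hull hn.1))
      ((hull 𝕜 S).smul_mem (neg_nonneg.2 hn.2.le) (subset_hull hp.1))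

theorem hull_inter_ker (ℓ : M →ₗ[𝕜] 𝕜) (S : Set M) :
    (hull 𝕜 S : Set M) ∩ LinearMap.ker ℓ = hull 𝕜 (fourierMotzkinGens ℓ S) :=
  (hull_inter_ker_subset ℓ S).antisymm (hull_fourierMotzkinGens_le ℓ S)

end PointedCone

namespace AddSubgroup

theorem exists_nsmul_mem_of_fg {G : Type*} [AddCommGroup G] {L Z : AddSubgroup G} (hZ : Z.FG)
    (h : ∀ z ∈ Z, ∃ n : ℕ, 0 < n ∧ n • z ∈ L) : ∃ m : ℕ, 0 < m ∧ ∀ z ∈ Z, m • z ∈ L := by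
  obtain ⟨s, rfl⟩ := hZ
  choose! n hn hnL using fun z (hz : z ∈ s) => h z (subset_closure hz)
  refine ⟨∏ z ∈ s, n z, Finset.prod_pos hn, fun z hz => ?_⟩
  refine (closure_le (L.comap (nsmulAddMonoidHom _))).2 (fun z hz => ?_) hz
  obtain ⟨k, hk⟩ := Finset.dvd_prod_of_mem n hz
  simpa [hk, mul_comm, mul_smul] using nsmul_mem (hnL z hz) k

theorem exists_finite_sub_mem {G : Type*} [AddCommGroup G] (Λ : AddSubgroup G)
    [Λ.FiniteIndex] (S : Set G) : ∃ F ⊆ S, F.Finite ∧ ∀ x ∈ S, ∃ c ∈ F, x - c ∈ Λ := by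
  obtain ⟨F, hFS, hF⟩ := Set.exists_subset_bijOn S (QuotientAddGroup.mk : G → G ⧸ Λ)
  refine ⟨F, hFS, Set.Finite.of_finite_image (Set.toFinite _) hF.injOn, fun x hx => ?_⟩
  obtain ⟨c, hc, hcx⟩ := hF.surjOn ⟨x, hx, rfl⟩
  exact ⟨c, hc, neg_add_eq_sub c x ▸ QuotientAddGroup.eq.1 hcx⟩

end AddSubgroup

namespace AffineSemigroup

open PointedCone

variable {d : ℕ}

def intToRat : (Fin d → ℤ) →+ (Fin d → ℚ) := (Int.castAddHom ℚ).compLeft (Fin d)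

def intToReal : (Fin d → ℤ) →+ (Fin d → ℝ) := (Int.castAddHom ℝ).compLeft (Fin d)

noncomputable def ratToReal : (Fin d → ℚ) →+ (Fin d → ℝ) :=
  (Rat.castHom ℝ).toAddMonoidHom.compLeft (Fin d)

@[simp] theorem intToRat_apply (x : Fin d → ℤ) (j : Fin d) : intToRat x j = x j := rfl

@[simp] theorem intToReal_apply (x : Fin d → ℤ) (j : Fin d) : intToReal x j = x j := rfl

@[simp] theorem ratToReal_apply (q : Fin d → ℚ) (j : Fin d) : ratToReal q j = q j := rfl

theorem intToRat_injective : Function.Injective (intToRat (d := d)) :=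
  fun x y h => funext fun j => by simpa using congrFun h j

@[simp] theorem ratToReal_intToRat (x : Fin d → ℤ) : ratToReal (intToRat x) = intToReal x := by
  ext j; simp

theorem ratToReal_smul (a : ℚ) (q : Fin d → ℚ) : ratToReal (a • q) = (a : ℝ) • ratToReal q := by
  ext j; simp

theorem dotProduct_ratToReal (u q : Fin d → ℚ) :
    ratToReal u ⬝ᵥ ratToReal q = ((u ⬝ᵥ q : ℚ) : ℝ) := by
  simp [dotProduct]

theorem hull_ratToReal_range {m : ℕ} (v : Fin m → Fin d → ℚ) :
    (hull ℝ (ratToReal '' Set.range v) : Set (Fin d → ℝ)) =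
      {x | ∃ c : Fin m → ℝ, (∀ i, 0 ≤ c i) ∧ x = ∑ i, c i • fun j => ((v i j : ℝ))} := by
  ext x
  rw [← Set.range_comp, SetLike.mem_coe, mem_hull_range_iff]
  exact exists_congr fun c => and_congr_right fun _ => eq_comm

theorem isRatPolyhedralCone_iff {σ : Set (Fin d → ℝ)} :
    IsRatPolyhedralCone σ ↔ ∃ S : Set (Fin d → ℚ), S.Finite ∧ σ = hull ℝ (ratToReal '' S) := by
  constructor
  · rintro ⟨m, v, rfl⟩
    exact ⟨Set.range v, Set.finite_range v, (hull_ratToReal_range v).symm⟩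
  · rintro ⟨S, hS, rfl⟩
    obtain ⟨m, v, -, rfl⟩ := hS.fin_param
    exact ⟨m, v, hull_ratToReal_range v⟩

theorem ratToReal_image_fourierMotzkinGens (u : Fin d → ℚ) (S : Set (Fin d → ℚ)) :
    ratToReal '' fourierMotzkinGens (dotProductEquiv ℚ (Fin d) u) S =
      fourierMotzkinGens (dotProductEquiv ℝ (Fin d) (ratToReal u)) (ratToReal '' S) := by
  set ℓ := dotProductEquiv ℝ (Fin d) (ratToReal u)
  set ℓ₀ := dotProductEquiv ℚ (Fin d) u
  have hℓ : ∀ q, ℓ (ratToReal q) = ((ℓ₀ q : ℚ) : ℝ) := fun q => by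
    simp [ℓ, ℓ₀, dotProduct_ratToReal]
  have hpair : ∀ a b, ratToReal (fourierMotzkinPair ℓ₀ a b) =
      fourierMotzkinPair ℓ (ratToReal a) (ratToReal b) := fun a b => by
    simp only [fourierMotzkinPair_apply, map_sub, ratToReal_smul, hℓ]
  ext x
  constructor
  · rintro ⟨y, ⟨hy, h0⟩ | ⟨a, ⟨ha, ha0⟩, b, ⟨hb, hb0⟩, rfl⟩, rfl⟩
    · exact Or.inl ⟨⟨y, hy, rfl⟩, by simp [hℓ, h0]⟩
    · exact Or.inr ⟨_, ⟨⟨a, ha, rfl⟩, by simpa [hℓ] using ha0⟩, _, ⟨⟨b, hb, rfl⟩,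
        by simpa [hℓ] using hb0⟩, (hpair a b).symm⟩
  · rintro (⟨⟨y, hy, rfl⟩, h0⟩ | ⟨_, ⟨⟨a, ha, rfl⟩, ha0⟩, _, ⟨⟨b, hb, rfl⟩, hb0⟩, rfl⟩)
    · exact ⟨y, Or.inl ⟨hy, by simpa [hℓ] using h0⟩, rfl⟩
    · exact ⟨_, Or.inr ⟨a, ⟨ha, by simpa [hℓ] using ha0⟩, b, ⟨hb, by simpa [hℓ] using hb0⟩,
        rfl⟩, hpair a b⟩

theorem _root_.IsRatPolyhedralCone.inter_ker {σ : Set (Fin d → ℝ)} (hσ : IsRatPolyhedralCone σ)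
    (u : Fin d → ℚ) :
    IsRatPolyhedralCone (σ ∩ LinearMap.ker (dotProductEquiv ℝ (Fin d) (ratToReal u))) := by
  obtain ⟨S, hS, rfl⟩ := isRatPolyhedralCone_iff.1 hσ
  rw [hull_inter_ker, ← ratToReal_image_fourierMotzkinGens]
  exact isRatPolyhedralCone_iff.2 ⟨_, finite_fourierMotzkinGens _ hS, rfl⟩

noncomputable def ratKernel (U : Finset (Fin d → ℚ)) : Submodule ℝ (Fin d → ℝ) :=
  ⨅ u ∈ U, LinearMap.ker (dotProductEquiv ℝ (Fin d) (ratToReal u))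

theorem mem_ratKernel {U : Finset (Fin d → ℚ)} {x : Fin d → ℝ} :
    x ∈ ratKernel U ↔ ∀ u ∈ U, ratToReal u ⬝ᵥ x = 0 := by
  simp [ratKernel]

theorem _root_.IsRatPolyhedralCone.inter_ratKernel {σ : Set (Fin d → ℝ)}
    (hσ : IsRatPolyhedralCone σ) (U : Finset (Fin d → ℚ)) :
    IsRatPolyhedralCone (σ ∩ ratKernel U) := by
  classical
  induction U using Finset.induction_on with
  | empty => simpa [ratKernel] using hσ
  | insert u U _ ih =>
    rw [ratKernel, Finset.iInf_insert, Submodule.coe_inf, Set.inter_left_comm, Set.inter_comm]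
    exact ih.inter_ker u

theorem exists_ratKernel_eq (W : Submodule ℚ (Fin d → ℚ)) :
    ∃ U : Finset (Fin d → ℚ), ∀ q, ratToReal q ∈ ratKernel U ↔ q ∈ W := by
  classical
  let b := Module.finBasis ℚ ((Fin d → ℚ) ⧸ W)
  let u := fun k => (dotProductEquiv ℚ (Fin d)).symm (b.coord k ∘ₗ W.mkQ)
  have hu : ∀ k q, u k ⬝ᵥ q = b.coord k (W.mkQ q) := fun k q => by
    rw [← dotProductEquiv_apply_apply, LinearEquiv.apply_symm_apply, LinearMap.comp_apply]
  refine ⟨Finset.univ.image u, fun q => ?_⟩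
  simp only [mem_ratKernel, Finset.mem_image, Finset.mem_univ, true_and, forall_exists_index,
    forall_apply_eq_imp_iff, dotProduct_ratToReal, Rat.cast_eq_zero, hu,
    b.forall_coord_eq_zero_iff, Submodule.mkQ_apply, Submodule.Quotient.mk_eq_zero]

theorem exists_nsmul_eq_of_mem_span {L : AddSubgroup (Fin d → ℤ)} {q : Fin d → ℚ}
    (hq : q ∈ Submodule.span ℚ (intToRat '' L)) :
    ∃ n : ℕ, 0 < n ∧ ∃ y ∈ L, intToRat y = n • q := by
  induction hq using Submodule.span_induction with
  | mem x hx =>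
    obtain ⟨y, hy, rfl⟩ := hx
    exact ⟨1, one_pos, y, hy, (one_smul _ _).symm⟩
  | zero => exact ⟨1, one_pos, 0, L.zero_mem, by simp⟩
  | add x y _ _ hx hy =>
    obtain ⟨n, hn, a, ha, hax⟩ := hx
    obtain ⟨n', hn', b, hb, hby⟩ := hy
    refine ⟨n * n', mul_pos hn hn', n' • a + n • b, add_mem (nsmul_mem ha _) (nsmul_mem hb _), ?_⟩
    rw [map_add, map_nsmul, map_nsmul, hax, hby, smul_add, mul_smul, mul_smul, smul_comm n' n x]
  | smul r x _ hx =>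
    obtain ⟨n, hn, a, ha, hax⟩ := hx
    refine ⟨r.den * n, mul_pos r.den_pos hn, r.num • a, zsmul_mem ha _, ?_⟩
    rw [map_zsmul, hax, ← Nat.cast_smul_eq_nsmul ℚ, ← Nat.cast_smul_eq_nsmul ℚ,
      ← Int.cast_smul_eq_zsmul ℚ, smul_smul, smul_smul]
    congr 1
    rw [← Rat.den_mul_eq_num]
    push_cast
    ring

theorem exists_nsmul_mem_of_mem_span (L : AddSubgroup (Fin d → ℤ)) :
    ∃ m : ℕ, 0 < m ∧
      ∀ z, intToRat z ∈ Submodule.span ℚ (intToRat '' (L : Set (Fin d → ℤ))) → m • z ∈ L := by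
  set W := Submodule.span ℚ (intToRat '' (L : Set (Fin d → ℤ)))
  have hfg : (W.toAddSubgroup.comap intToRat).FG := by
    rw [← AddSubgroup.toIntSubmodule_toAddSubgroup (W.toAddSubgroup.comap intToRat),
      ← Submodule.fg_iff_addSubgroup_fg]
    exact IsNoetherian.noetherian _
  refine AddSubgroup.exists_nsmul_mem_of_fg hfg fun z hz => ?_
  obtain ⟨n, hn, y, hyL, hy⟩ := exists_nsmul_eq_of_mem_span hz
  rw [← map_nsmul] at hy
  exact ⟨n, hn, intToRat_injective hy ▸ hyL⟩

theorem exists_ratKernel_of_addSubgroup (L : AddSubgroup (Fin d → ℤ)) :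
    ∃ (U : Finset (Fin d → ℚ)) (Λ₀ : AddSubgroup (Fin d → ℤ)), Λ₀.FiniteIndex ∧
      (∀ x ∈ L, intToReal x ∈ ratKernel U) ∧ ∀ y ∈ Λ₀, intToReal y ∈ ratKernel U → y ∈ L := by
  obtain ⟨U, hU⟩ := exists_ratKernel_eq (Submodule.span ℚ (intToRat '' (L : Set (Fin d → ℤ))))
  obtain ⟨m, hm, hmL⟩ := exists_nsmul_mem_of_mem_span L
  refine ⟨U, AddSubgroup.pi Set.univ fun _ => AddSubgroup.zmultiples (m : ℤ),
    ⟨by simp [AddSubgroup.index_pi, hm.ne']⟩,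
    fun x hx => ratToReal_intToRat x ▸ (hU _).2 (Submodule.subset_span ⟨x, hx, rfl⟩),
    fun y hy hyU => ?_⟩
  choose z hz using fun j => Int.mem_zmultiples_iff.1 (hy j (Set.mem_univ j))
  obtain rfl : y = m • z := funext fun j => by simp [hz j]
  refine hmL z ?_
  rwa [← ratToReal_intToRat, hU, map_nsmul, ← Nat.cast_smul_eq_nsmul ℚ,
    Submodule.smul_mem_iff _ (by positivity)] at hyU

theorem span_intToRat_eq_top (Λ : AddSubgroup (Fin d → ℤ)) [Λ.FiniteIndex] :
    Submodule.span ℚ (intToRat '' (Λ : Set (Fin d → ℤ))) = ⊤ := by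
  rw [eq_top_iff, ← (Pi.basisFun ℚ (Fin d)).span_eq, Submodule.span_le]
  rintro _ ⟨j, rfl⟩
  have hmem : intToRat (Λ.index • Pi.single j 1) ∈
      Submodule.span ℚ (intToRat '' (Λ : Set (Fin d → ℤ))) :=
    Submodule.subset_span ⟨_, Λ.nsmul_index_mem _, rfl⟩
  have hindex : (Λ.index : ℚ) ≠ 0 := Nat.cast_ne_zero.2 AddSubgroup.FiniteIndex.index_ne_zero
  have : intToRat (Λ.index • Pi.single j 1) = (Λ.index : ℚ) • Pi.basisFun ℚ (Fin d) j := by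
    ext i; by_cases h : i = j <;> simp [h]
  rwa [this, Submodule.smul_mem_iff _ hindex] at hmem

theorem _root_.IsRatPolyhedralCone.exists_eq_hull_of_finiteIndex {τ : Set (Fin d → ℝ)}
    (hτ : IsRatPolyhedralCone τ) (Λ : AddSubgroup (Fin d → ℤ)) [Λ.FiniteIndex] :
    ∃ (ι : Type) (_ : Fintype ι) (v : ι → Fin d → ℤ),
      (∀ i, v i ∈ Λ) ∧ τ = hull ℝ (Set.range (intToReal ∘ v)) := by
  obtain ⟨S, hS, rfl⟩ := isRatPolyhedralCone_iff.1 hτ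
  choose n hn v hvΛ hv using fun q : S =>
    exists_nsmul_eq_of_mem_span (span_intToRat_eq_top Λ ▸ Submodule.mem_top (x := (q : Fin d → ℚ)))
  have hvq : ∀ q : S, intToReal (v q) = (n q : ℝ) • ratToReal (q : Fin d → ℚ) := fun q => by
    rw [← ratToReal_intToRat, hv, ← Nat.cast_smul_eq_nsmul ℚ, ratToReal_smul, Rat.cast_natCast]
  refine ⟨S, hS.fintype, v, hvΛ, le_antisymm ?_ ?_⟩
  · refine hull_le_hull_of_forall_exists_smul_mem fun _ ⟨q, hq, hqx⟩ => ?_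
    exact ⟨n ⟨q, hq⟩, Nat.cast_pos.2 (hn _), ⟨⟨q, hq⟩, by simp [hvq, hqx]⟩⟩
  · refine hull_le_hull_of_forall_exists_smul_mem fun _ ⟨q, hqx⟩ => ?_
    have hq : (0 : ℝ) < n q := Nat.cast_pos.2 (hn q)
    refine ⟨(n q : ℝ)⁻¹, inv_pos.2 hq, q, q.2, ?_⟩
    rw [← hqx, Function.comp_apply, hvq, inv_smul_smul₀ hq.ne']

def normalAffineSemigroup (τ : Set (Fin d → ℝ)) (Λ : AddSubgroup (Fin d → ℤ)) :
    Set (Fin d → ℤ) :=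
  {x | intToReal x ∈ τ ∧ x ∈ Λ}

def IsNormalUnion (Λ : AddSubgroup (Fin d → ℤ)) (S : Set (Fin d → ℤ)) : Prop :=
  ∃ P : Set (Set (Fin d → ℝ) × (Fin d → ℤ)), P.Finite ∧ (∀ p ∈ P, IsRatPolyhedralCone p.1) ∧
    S = ⋃ p ∈ P, {p.2} + normalAffineSemigroup p.1 Λ

section IsNormalUnion

variable {Λ : AddSubgroup (Fin d → ℤ)}

theorem isNormalUnion_singleton_add {τ : Set (Fin d → ℝ)} (hτ : IsRatPolyhedralCone τ)
    (g : Fin d → ℤ) : IsNormalUnion Λ ({g} + normalAffineSemigroup τ Λ) :=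
  ⟨{(τ, g)}, Set.finite_singleton _, by simpa using hτ, by simp⟩

theorem IsNormalUnion.singleton_add {S : Set (Fin d → ℤ)} (h : IsNormalUnion Λ S)
    (a : Fin d → ℤ) : IsNormalUnion Λ ({a} + S) := by
  obtain ⟨P, hP, hcone, rfl⟩ := h
  refine ⟨(fun p => (p.1, a + p.2)) '' P, hP.image _, Set.forall_mem_image.2 hcone, ?_⟩
  simp_rw [Set.add_iUnion₂, Set.biUnion_image, ← add_assoc, Set.singleton_add_singleton]

theorem IsNormalUnion.biUnion {ι : Type*} {I : Set ι} (hI : I.Finite) {S : ι → Set (Fin d → ℤ)}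
    (h : ∀ i ∈ I, IsNormalUnion Λ (S i)) : IsNormalUnion Λ (⋃ i ∈ I, S i) := by
  choose! P hP hcone hS using h
  refine ⟨⋃ i ∈ I, P i, hI.biUnion hP, ?_, ?_⟩
  · simp only [Set.mem_iUnion]
    rintro p ⟨i, hi, hp⟩
    exact hcone i hi p hp
  · rw [Set.iUnion₂_congr hS]
    ext x
    simp only [Set.mem_iUnion, exists_prop]
    aesop

theorem IsNormalUnion.iUnion {ι : Type*} [Finite ι] {S : ι → Set (Fin d → ℤ)}
    (h : ∀ i, IsNormalUnion Λ (S i)) : IsNormalUnion Λ (⋃ i, S i) := by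
  simpa using IsNormalUnion.biUnion Set.finite_univ fun i _ => h i

theorem IsNormalUnion.exists_fin {S : Set (Fin d → ℤ)} (h : IsNormalUnion Λ S) :
    ∃ (r : ℕ) (τ : Fin r → Set (Fin d → ℝ)) (g : Fin r → Fin d → ℤ),
      (∀ j, IsRatPolyhedralCone (τ j)) ∧ S = ⋃ j, {g j} + normalAffineSemigroup (τ j) Λ := by
  obtain ⟨P, hP, hcone, rfl⟩ := h
  obtain ⟨r, e, -, rfl⟩ := hP.fin_param
  exact ⟨r, fun j => (e j).1, fun j => (e j).2, fun j => hcone _ ⟨j, rfl⟩, Set.biUnion_range⟩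

end IsNormalUnion

section Parallelepiped

variable {ι : Type*} [Fintype ι] {Λ : AddSubgroup (Fin d → ℤ)} {v : ι → Fin d → ℤ}

theorem exists_sub_bounded_of_mem_hull (hv : ∀ i, v i ∈ Λ) {x : Fin d → ℤ}
    (hx : intToReal x ∈ hull ℝ (Set.range (intToReal ∘ v))) :
    ∃ y ∈ normalAffineSemigroup (hull ℝ (Set.range (intToReal ∘ v))) Λ,
      intToReal (x - y) ∈ hull ℝ (Set.range (intToReal ∘ v)) ∧
        ∀ j, |(x - y) j| ≤ ∑ i, |v i j| := by
  obtain ⟨t, ht, hx⟩ := mem_hull_range_iff.1 hx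
  refine ⟨∑ i, ⌊t i⌋₊ • v i, ⟨?_, sum_mem fun i _ => nsmul_mem (hv i) _⟩, ?_⟩
  · rw [map_sum]
    exact sum_mem fun i _ => by
      rw [map_nsmul]; exact nsmul_mem (subset_hull (Set.mem_range_self i)) _
  have hxy : intToReal (x - ∑ i, ⌊t i⌋₊ • v i) = ∑ i, (t i - ⌊t i⌋₊) • intToReal (v i) := by
    rw [map_sub, ← hx, map_sum, ← Finset.sum_sub_distrib]
    refine Finset.sum_congr rfl fun i _ => ?_
    rw [map_nsmul, ← Nat.cast_smul_eq_nsmul ℝ, sub_smul, Function.comp_apply]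
  have hfract : ∀ i, 0 ≤ t i - ⌊t i⌋₊ ∧ t i - ⌊t i⌋₊ ≤ 1 := fun i =>
    ⟨sub_nonneg.2 (Nat.floor_le (ht i)), by linarith [Nat.lt_floor_add_one (t i)]⟩
  refine ⟨hxy ▸ mem_hull_range_iff.2 ⟨_, fun i => (hfract i).1, rfl⟩, fun j => ?_⟩
  have : |((x - ∑ i, ⌊t i⌋₊ • v i) j : ℝ)| ≤ ∑ i, |(v i j : ℝ)| := by
    rw [show ((x - ∑ i, ⌊t i⌋₊ • v i) j : ℝ) = ∑ i, (t i - ⌊t i⌋₊) * v i j by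
      simpa using congrFun hxy j]
    refine (Finset.abs_sum_le_sum_abs _ _).trans (Finset.sum_le_sum fun i _ => ?_)
    rw [abs_mul, abs_of_nonneg (hfract i).1]
    exact mul_le_of_le_one_left (abs_nonneg _) (hfract i).2
  exact_mod_cast this

theorem exists_finite_translates_hull (hv : ∀ i, v i ∈ Λ) (c : Fin d → ℤ) :
    ∃ F : Set (Fin d → ℤ), F.Finite ∧
      {x | intToReal x ∈ (hull ℝ (Set.range (intToReal ∘ v)) : Set (Fin d → ℝ)) ∧ x - c ∈ Λ} =
        ⋃ g ∈ F, {g} + normalAffineSemigroup (hull ℝ (Set.range (intToReal ∘ v))) Λ := by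
  set τ := hull ℝ (Set.range (intToReal ∘ v))
  set B : Fin d → ℤ := fun j => ∑ i, |v i j|
  refine ⟨{g | intToReal g ∈ τ ∧ g - c ∈ Λ} ∩ Set.Icc (-B) B,
    (Set.finite_Icc _ _).subset Set.inter_subset_right, ?_⟩
  ext x
  simp only [Set.mem_iUnion, Set.singleton_add, Set.mem_image, exists_prop, Set.mem_ofPred_eq,
    normalAffineSemigroup, Set.mem_inter_iff]
  constructor
  · rintro ⟨hxτ, hxc⟩
    obtain ⟨y, ⟨hyτ, hyΛ⟩, hxyτ, hbound⟩ := exists_sub_bounded_of_mem_hull hv hxτ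
    refine ⟨x - y, ⟨⟨hxyτ, by simpa [sub_right_comm] using sub_mem hxc hyΛ⟩,
      fun j => (abs_le.1 (hbound j)).1, fun j => (abs_le.1 (hbound j)).2⟩,
      y, ⟨hyτ, hyΛ⟩, sub_add_cancel x y⟩
  · rintro ⟨g, ⟨⟨hgτ, hgc⟩, -⟩, y, ⟨hyτ, hyΛ⟩, rfl⟩
    exact ⟨by rw [map_add]; exact add_mem hgτ hyτ,
      by simpa [add_sub_right_comm] using add_mem hgc hyΛ⟩

end Parallelepiped

theorem _root_.IsRatPolyhedralCone.isNormalUnion_coset {τ : Set (Fin d → ℝ)}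
    (hτ : IsRatPolyhedralCone τ) (Λ : AddSubgroup (Fin d → ℤ)) [Λ.FiniteIndex] (c : Fin d → ℤ) :
    IsNormalUnion Λ {x | intToReal x ∈ τ ∧ x - c ∈ Λ} := by
  obtain ⟨ι, _, v, hvΛ, rfl⟩ := hτ.exists_eq_hull_of_finiteIndex Λ
  obtain ⟨F, hF, hFeq⟩ := exists_finite_translates_hull hvΛ c
  rw [hFeq]
  exact .biUnion hF fun g _ => isNormalUnion_singleton_add hτ g

theorem _root_.IsRatPolyhedralCone.exists_finiteIndex_isNormalUnion {σ : Set (Fin d → ℝ)}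
    (hσ : IsRatPolyhedralCone σ) (L : AddSubgroup (Fin d → ℤ)) :
    ∃ Λ₀ : AddSubgroup (Fin d → ℤ), Λ₀.FiniteIndex ∧ ∀ Λ : AddSubgroup (Fin d → ℤ),
      Λ.FiniteIndex → Λ ≤ Λ₀ → IsNormalUnion Λ (normalAffineSemigroup σ L) := by
  obtain ⟨U, Λ₀, hΛ₀, hLU, hUL⟩ := exists_ratKernel_of_addSubgroup L
  refine ⟨Λ₀, hΛ₀, fun Λ hΛ hΛΛ₀ => ?_⟩
  obtain ⟨F, hFL, hF, hrep⟩ := Λ.exists_finite_sub_mem (L : Set (Fin d → ℤ))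
  have hsplit : normalAffineSemigroup σ L =
      ⋃ c ∈ F, {x | intToReal x ∈ σ ∩ ratKernel U ∧ x - c ∈ Λ} := by
    ext x
    simp only [normalAffineSemigroup, Set.mem_iUnion, Set.mem_ofPred_eq, Set.mem_inter_iff,
      SetLike.mem_coe, exists_prop]
    constructor
    · rintro ⟨hxσ, hxL⟩
      obtain ⟨c, hcF, hxc⟩ := hrep x hxL
      exact ⟨c, hcF, ⟨hxσ, hLU x hxL⟩, hxc⟩
    · rintro ⟨c, hcF, ⟨hxσ, hxU⟩, hxc⟩
      have hcL : c ∈ L := hFL hcF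
      have hxcL : x - c ∈ L :=
        hUL _ (hΛΛ₀ hxc) (by rw [map_sub]; exact sub_mem hxU (hLU c hcL))
      exact ⟨hxσ, by simpa using add_mem hxcL hcL⟩
  rw [hsplit]
  exact .biUnion hF fun c _ => (hσ.inter_ratKernel U).isNormalUnion_coset Λ c

end AffineSemigroup

/-- If `W ⊆ ℤ^d` is a finite union of translates of normal affine semigroups
`Aᵢ = σᵢ ∩ Lᵢ` (with `σᵢ` a rational polyhedral cone and `Lᵢ ⊆ ℤ^d` a subgroup),
then `W` is a finite union of translates of normal affine semigroups `σⱼ ∩ L`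
all defined with respect to a single finite-index sublattice `L ⊆ ℤ^d`. -/
theorem union_of_normal_common_lattice {d n : ℕ} (W : Set (Fin d → ℤ))
    (f : Fin n → (Fin d → ℤ)) (σ : Fin n → Set (Fin d → ℝ))
    (L : Fin n → AddSubgroup (Fin d → ℤ))
    (hσ : ∀ i, IsRatPolyhedralCone (σ i))
    (hW : W = ⋃ i, (({f i} : Set (Fin d → ℤ)) +
      {x : Fin d → ℤ | (fun j => (x j : ℝ)) ∈ σ i ∧ x ∈ L i})) :
    ∃ (L' : AddSubgroup (Fin d → ℤ)) (_ : L'.FiniteIndex)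
      (r : ℕ) (τ : Fin r → Set (Fin d → ℝ)) (g : Fin r → (Fin d → ℤ)),
      (∀ j, IsRatPolyhedralCone (τ j)) ∧
      W = ⋃ j, (({g j} : Set (Fin d → ℤ)) +
        {x : Fin d → ℤ | (fun k => (x k : ℝ)) ∈ τ j ∧ x ∈ L'}) := by
  choose Λ₀ hΛ₀ hpiece using fun i => (hσ i).exists_finiteIndex_isNormalUnion (L i)
  have hΛ : (⨅ i, Λ₀ i).FiniteIndex := AddSubgroup.finiteIndex_iInf hΛ₀
  have hW' : AffineSemigroup.IsNormalUnion (⨅ i, Λ₀ i) W := by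
    rw [hW]
    exact .iUnion fun i => (hpiece i _ hΛ (iInf_le Λ₀ i)).singleton_add (f i)
  obtain ⟨r, τ, g, hτ, hWeq⟩ := hW'.exists_fin
  exact ⟨_, hΛ, r, τ, g, hτ, hWeq⟩
end

section
/- If M is an ideal in an affine semigroup A ⊆ ℤ^d, then M can be written as a finite disjoint union of translates fᵢ + Fᵢ, where each Fᵢ is a face of A and each fᵢ ∈ ℤ^d; that is, M possesses an affine stratification in which each stratum is a translate of a face of A. -/
/-!
For ideals `I`, `J` of `A`, the difference `J \ I` is a finite disjoint union of translates of
faces; the theorem is the case `I = ∅`. The proof is by Noetherian induction on `I`, ideals of a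
finitely generated monoid satisfying the ascending chain condition. Choose `x ∈ J \ I` whose
ideal quotient `(I : x) = {b ∈ A | x + b ∈ I}` is maximal. Then `F = {b ∈ A | x + b ∉ I}` is a
face of `A`, the translate `x + F` lies in `J \ I`, and what remains of `J \ I` is
`J \ (I ∪ (x + A))` for the strictly larger ideal `I ∪ (x + A)`.
-/

open Pointwise

namespace AddSubmonoid

variable {G : Type*} [AddCommMonoid G]

def IsIdeal (A : AddSubmonoid G) (I : Set G) : Prop :=
  I ⊆ A ∧ ∀ x ∈ I, ∀ a ∈ A, x + a ∈ I

def IsFace (A : AddSubmonoid G) (F : AddSubmonoid G) : Prop :=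
  F ≤ A ∧ ∀ a b, a ∈ A → b ∈ A → a + b ∈ F → a ∈ F ∧ b ∈ F

def colon (A : AddSubmonoid G) (I : Set G) (x : G) : Set G :=
  {b | b ∈ A ∧ x + b ∈ I}

def IsFaceStratification (A : AddSubmonoid G) (S : Set G) : Prop :=
  ∃ (r : ℕ) (f : Fin r → G) (F : Fin r → AddSubmonoid G),
    (∀ i, A.IsFace (F i)) ∧
    (Pairwise fun i j => Disjoint (({f i} : Set G) + (F i : Set G))
      (({f j} : Set G) + (F j : Set G))) ∧
    S = ⋃ i, ({f i} : Set G) + (F i : Set G)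

variable {A : AddSubmonoid G} {I J : Set G} {x : G}

theorem isIdeal_empty : A.IsIdeal ∅ :=
  ⟨Set.empty_subset _, fun _ h => h.elim⟩

theorem IsIdeal.union {I' : Set G} (hI : A.IsIdeal I) (hI' : A.IsIdeal I') :
    A.IsIdeal (I ∪ I') :=
  ⟨Set.union_subset hI.1 hI'.1, fun x hx a ha =>
    hx.imp (fun h => hI.2 x h a ha) (fun h => hI'.2 x h a ha)⟩

theorem isIdeal_singleton_add (hx : x ∈ A) : A.IsIdeal ({x} + A) := by
  rw [Set.singleton_add]
  refine ⟨?_, ?_⟩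
  · rintro _ ⟨b, hb, rfl⟩
    exact A.add_mem hx hb
  · rintro _ ⟨b, hb, rfl⟩ a ha
    exact ⟨b + a, A.add_mem hb ha, (add_assoc x b a).symm⟩

theorem IsIdeal.colon (hI : A.IsIdeal I) (x : G) : A.IsIdeal (A.colon I x) :=
  ⟨fun _ hb => hb.1, fun b hb a ha =>
    ⟨A.add_mem hb.1 ha, add_assoc x b a ▸ hI.2 _ hb.2 a ha⟩⟩

theorem IsIdeal.colon_subset_colon_add (hI : A.IsIdeal I) {a : G} (ha : a ∈ A) :
    A.colon I x ⊆ A.colon I (x + a) :=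
  fun b hb => ⟨hb.1, add_right_comm x a b ▸ hI.2 _ hb.2 a ha⟩

/-- Ideals of `A` are pulled back along the surjection `ℕ^s → A` to semigroup ideals of `ℕ^s`,
which satisfy the ascending chain condition by Dickson's lemma. -/
theorem wellFoundedOn_isIdeal (hA : A.FG) : {I | A.IsIdeal I}.WellFoundedOn (· ⊃ ·) := by
  obtain ⟨s, rfl⟩ := hA
  let π := Fintype.linearCombination ℕ ((↑) : s → G)
  have hπ (c : s → ℕ) : π c ∈ closure (s : Set G) :=
    mem_closure_finset'.2 ⟨c, Fintype.linearCombination_apply ℕ _ c⟩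
  have hsurj {y : G} (hy : y ∈ closure (s : Set G)) : ∃ c, π c = y := by
    obtain ⟨c, rfl⟩ := mem_closure_finset'.1 hy
    exact ⟨c, Fintype.linearCombination_apply ℕ _ c⟩
  let Φ (I : {I | (closure (s : Set G)).IsIdeal I}) : AddSemigroupIdeal (s → ℕ) :=
    { carrier := π ⁻¹' I
      vadd_mem' := fun c d hd => by
        simpa only [Set.mem_preimage, vadd_eq_add, map_add, add_comm (π c)]
          using I.2.2 _ hd _ (hπ c) }
  refine Subrelation.wf (fun {J I} hJI => ?_) (InvImage.wf Φ wellFounded_gt)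
  obtain ⟨y, hyJ, hyI⟩ := Set.exists_of_ssubset hJI
  obtain ⟨c, rfl⟩ := hsurj (J.2.1 hyJ)
  exact SetLike.lt_iff_le_and_exists.2 ⟨fun d hd => hJI.1 hd, c, hyJ, hyI⟩

theorem exists_maximal_colon (hA : A.FG) (hI : A.IsIdeal I) (hne : (J \ I).Nonempty) :
    ∃ x ∈ J \ I, ∀ y ∈ J \ I, ¬ A.colon I x ⊂ A.colon I y := by
  have hC : A.colon I '' (J \ I) ⊆ {I | A.IsIdeal I} :=
    Set.image_subset_iff.2 fun x _ => hI.colon x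
  obtain ⟨_, ⟨x, hx, rfl⟩, hmin⟩ := (Set.wellFoundedOn_iff.1
    ((wellFoundedOn_isIdeal hA).subset hC)).has_min _ (hne.image _)
  exact ⟨x, hx, fun y hy hxy => hmin _ ⟨y, hy, rfl⟩ ⟨hxy, ⟨y, hy, rfl⟩, ⟨x, hx, rfl⟩⟩⟩

theorem exists_isFace_of_maximal_colon (hI : A.IsIdeal I) (hxI : x ∉ I)
    (hmax : ∀ a ∈ A, x + a ∉ I → ¬ A.colon I x ⊂ A.colon I (x + a)) :
    ∃ F : AddSubmonoid G, A.IsFace F ∧ (F : Set G) = {b | b ∈ A ∧ x + b ∉ I} := by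
  -- maximality forces `(I : x + a) = (I : x)` along `F`, which makes `F` closed under addition
  have hcolon_eq {a : G} (ha : a ∈ A) (hxa : x + a ∉ I) : A.colon I (x + a) = A.colon I x :=
    ((hI.colon_subset_colon_add ha).eq_or_ssubset.resolve_right (hmax a ha hxa)).symm
  refine ⟨{ carrier := {b | b ∈ A ∧ x + b ∉ I}
            zero_mem' := ⟨A.zero_mem, by rwa [add_zero]⟩
            add_mem' := ?_ }, ⟨fun b hb => hb.1, ?_⟩, rfl⟩
  · rintro a b ⟨ha, hxa⟩ ⟨hb, hxb⟩
    refine ⟨A.add_mem ha hb, fun hxab => hxb ?_⟩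
    have hb' : b ∈ A.colon I (x + a) := ⟨hb, by rwa [← add_assoc] at hxab⟩
    exact (hcolon_eq ha hxa ▸ hb').2
  · rintro a b ha hb ⟨-, hxab⟩
    refine ⟨⟨ha, fun hxa => hxab ?_⟩, ⟨hb, fun hxb => hxab ?_⟩⟩
    · simpa only [add_assoc] using hI.2 _ hxa b hb
    · rw [add_comm a b, ← add_assoc]
      exact hI.2 _ hxb a ha

theorem sdiff_eq_union_sdiff (hJ : A.IsIdeal J) (hx : x ∈ J) :
    J \ I = ({x} + {b | b ∈ A ∧ x + b ∉ I}) ∪ J \ (I ∪ ({x} + A)) := by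
  ext y
  simp only [Set.singleton_add, Set.mem_sdiff, Set.mem_union, Set.mem_image, Set.mem_ofPred_eq,
    SetLike.mem_coe]
  constructor
  · rintro ⟨hyJ, hyI⟩
    by_cases hy : ∃ b ∈ A, x + b = y
    · obtain ⟨b, hb, rfl⟩ := hy
      exact Or.inl ⟨b, ⟨hb, hyI⟩, rfl⟩
    · exact Or.inr ⟨hyJ, not_or.2 ⟨hyI, hy⟩⟩
  · rintro (⟨b, ⟨hb, hxb⟩, rfl⟩ | ⟨hyJ, hy⟩)
    · exact ⟨hJ.2 x hx b hb, hxb⟩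
    · exact ⟨hyJ, fun hyI => hy (Or.inl hyI)⟩

theorem isFaceStratification_empty : A.IsFaceStratification ∅ :=
  ⟨0, finZeroElim, finZeroElim, finZeroElim, fun i => i.elim0, by simp⟩

theorem IsFaceStratification.union_translate {S : Set G} (hS : A.IsFaceStratification S)
    {F : AddSubmonoid G} (hF : A.IsFace F) (hdisj : Disjoint ({x} + (F : Set G)) S) :
    A.IsFaceStratification (({x} + F) ∪ S) := by
  obtain ⟨r, f, Fs, hFs, hpair, rfl⟩ := hS
  refine ⟨r + 1, Fin.cons x f, Fin.cons F Fs, Fin.cases hF hFs, ?_, ?_⟩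
  · have hsub (i : Fin r) : ({f i} : Set G) + (Fs i : Set G) ⊆ ⋃ j, {f j} + (Fs j : Set G) :=
      Set.subset_iUnion (fun j => ({f j} : Set G) + (Fs j : Set G)) i
    intro i j hij
    cases i using Fin.cases <;> cases j using Fin.cases
    · exact absurd rfl hij
    · simpa using hdisj.mono_right (hsub _)
    · simpa using (hdisj.mono_right (hsub _)).symm
    · simpa using hpair (fun h => hij (congrArg Fin.succ h))
  · ext y
    simp [Fin.exists_fin_succ]

theorem isFaceStratification_sdiff (hA : A.FG) (hJ : A.IsIdeal J) (hI : A.IsIdeal I) :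
    A.IsFaceStratification (J \ I) := by
  refine (wellFoundedOn_isIdeal hA).induction hI (P := fun I => A.IsFaceStratification (J \ I))
    fun I hI ih => ?_
  rcases (J \ I).eq_empty_or_nonempty with hempty | hne
  · rw [hempty]
    exact isFaceStratification_empty
  obtain ⟨x, ⟨hxJ, hxI⟩, hmax⟩ := exists_maximal_colon hA hI hne
  obtain ⟨F, hF, hFeq⟩ := exists_isFace_of_maximal_colon hI hxI
    fun a ha hxa => hmax _ ⟨hJ.2 x hxJ a ha, hxa⟩
  have hx : x ∈ ({x} : Set G) + A := ⟨x, rfl, 0, A.zero_mem, add_zero x⟩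
  have hI' : A.IsIdeal (I ∪ ({x} + A)) := hI.union (isIdeal_singleton_add (hJ.1 hxJ))
  have hII' : I ⊂ I ∪ ({x} + A) :=
    Set.ssubset_iff_subset_ne.2 ⟨Set.subset_union_left, fun h => hxI (h ▸ Or.inr hx)⟩
  have hFA : ({x} : Set G) + F ⊆ {x} + A := Set.add_subset_add_left hF.1
  rw [sdiff_eq_union_sdiff hJ hxJ, ← hFeq]
  exact (ih _ hI' hII').union_translate hF <|
    Set.disjoint_sdiff_right.mono hFA (Set.sdiff_subset_sdiff_right Set.subset_union_right)

end AddSubmonoid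

/-- If `M` is an ideal in an affine semigroup `A ⊆ ℤ^d` (i.e. `M ⊆ A` and
`M + A ⊆ M`), then `M` is a finite disjoint union of translates of faces of `A`,
where a face of `A` is a submonoid `F ≤ A` such that `a + b ∈ F` with `a, b ∈ A`
forces `a ∈ F` and `b ∈ F`. -/
theorem ideal_disjoint_union_of_translates_of_faces {d : ℕ}
    (A : AddSubmonoid (Fin d → ℤ)) (hA : A.FG)
    (M : Set (Fin d → ℤ)) (hMA : M ⊆ (A : Set (Fin d → ℤ)))
    (hM : ∀ m ∈ M, ∀ a ∈ A, m + a ∈ M) :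
    ∃ (r : ℕ) (f : Fin r → (Fin d → ℤ)) (F : Fin r → AddSubmonoid (Fin d → ℤ)),
      (∀ i, F i ≤ A ∧ ∀ a b, a ∈ A → b ∈ A → a + b ∈ F i → a ∈ F i ∧ b ∈ F i) ∧
      (Pairwise fun i j => Disjoint
        (({f i} : Set (Fin d → ℤ)) + (F i : Set (Fin d → ℤ)))
        (({f j} : Set (Fin d → ℤ)) + (F j : Set (Fin d → ℤ)))) ∧
      M = ⋃ i, (({f i} : Set (Fin d → ℤ)) + (F i : Set (Fin d → ℤ))) := by
  have h := AddSubmonoid.isFaceStratification_sdiff hA ⟨hMA, hM⟩ AddSubmonoid.isIdeal_empty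
  rwa [Set.sdiff_empty] at h
end

section
/- Every ideal M ⊆ ℕ^n has a Stanley decomposition: M can be written as a finite disjoint union M = ⨄ᵢ (aᵢ + ℕ^{Jᵢ}), where each aᵢ ∈ ℕ^n, each Jᵢ ⊆ {1, …, n}, and ℕ^{Jᵢ} = {x ∈ ℕ^n : xⱼ = 0 for all j ∉ Jᵢ} is the corresponding face of ℕ^n. -/
/-!
Induction on `n`. For an ideal `I ⊆ ℕ^(n+1)` the slices `I_k = {y | (k, y) ∈ I}` are ideals of
`ℕ^n` increasing in `k`; ideals of the well-quasi-ordered monoid `ℕ^n` satisfy the ascending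
chain condition (Dickson's lemma), so the slices are constant from some `N` on. Then `I` is the
disjoint union of the layers `{k} × I_k` for `k < N` and of the tail `[N, ∞) × I_N`. A Stanley
decomposition of `I_k` lifts to one of the layer, each piece `a + ℕ^J` becoming `(k, a) + ℕ^J`,
and one of `I_N` lifts to one of the tail, each piece becoming `(N, a) + ℕ^({0} ∪ J)`.
-/

open Function Pointwise

def shiftedFace {ι : Type*} (a : ι → ℕ) (J : Set ι) : Set (ι → ℕ) :=
  ({a} : Set (ι → ℕ)) + {x : ι → ℕ | ∀ k ∉ J, x k = 0}

section ShiftedFace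

variable {ι : Type*}

theorem mem_shiftedFace {a z : ι → ℕ} {J : Set ι} :
    z ∈ shiftedFace a J ↔ a ≤ z ∧ ∀ k ∉ J, z k = a k := by
  rw [shiftedFace, Set.singleton_add, le_iff_exists_add]
  constructor
  · rintro ⟨x, hx, rfl⟩
    exact ⟨⟨x, rfl⟩, fun k hk => by simp [hx k hk]⟩
  · rintro ⟨⟨x, rfl⟩, h⟩
    exact ⟨x, fun k hk => by simpa using h k hk, rfl⟩

theorem shiftedFace_zero_univ : shiftedFace (0 : ι → ℕ) Set.univ = Set.univ :=
  Set.eq_univ_of_forall fun _ => mem_shiftedFace.2 ⟨zero_le, fun _ hk => absurd trivial hk⟩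

end ShiftedFace

section Cons

theorem Fin.cons_add_cons {α : Type*} [Add α] {n : ℕ} (x y : α) (u v : Fin n → α) :
    (Fin.cons x u : Fin (n + 1) → α) + Fin.cons y v = Fin.cons (x + y) (u + v) :=
  Matrix.cons_add_cons x u y v

variable {n : ℕ}

theorem cons_mem_shiftedFace_cons {x k : ℕ} {y a : Fin n → ℕ} {J : Set (Fin (n + 1))} :
    (Fin.cons x y : Fin (n + 1) → ℕ) ∈ shiftedFace (Fin.cons k a) J ↔
      (k ≤ x ∧ (0 ∉ J → x = k)) ∧ y ∈ shiftedFace a (Fin.succ ⁻¹' J) := by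
  simp only [mem_shiftedFace, Fin.cons_le_cons, Fin.forall_fin_succ, Fin.cons_zero,
    Fin.cons_succ, Set.mem_preimage]
  tauto

theorem shiftedFace_cons_image_succ (k : ℕ) (a : Fin n → ℕ) (J : Set (Fin n)) :
    shiftedFace (Fin.cons k a) (Fin.succ '' J) = {z | z 0 = k} ∩ Fin.tail ⁻¹' shiftedFace a J := by
  ext z
  rw [← Fin.cons_self_tail z, cons_mem_shiftedFace_cons,
    Set.preimage_image_eq _ (Fin.succ_injective n)]
  simp +contextual [Fin.succ_ne_zero, and_comm]

theorem shiftedFace_cons_insert_zero (k : ℕ) (a : Fin n → ℕ) (J : Set (Fin n)) :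
    shiftedFace (Fin.cons k a) (insert 0 (Fin.succ '' J)) =
      {z | k ≤ z 0} ∩ Fin.tail ⁻¹' shiftedFace a J := by
  ext z
  rw [← Fin.cons_self_tail z, cons_mem_shiftedFace_cons]
  have hJ : Fin.succ ⁻¹' insert 0 (Fin.succ '' J) = J := by
    ext j; simp [Fin.succ_ne_zero]
  simp [hJ]

end Cons

def HasStanleyDecomposition {ι : Type*} (M : Set (ι → ℕ)) : Prop :=
  ∃ (κ : Type) (_ : Finite κ) (a : κ → ι → ℕ) (J : κ → Set ι),
    Pairwise (Disjoint on fun i => shiftedFace (a i) (J i)) ∧ M = ⋃ i, shiftedFace (a i) (J i)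

namespace HasStanleyDecomposition

variable {ι : Type*}

theorem empty : HasStanleyDecomposition (∅ : Set (ι → ℕ)) :=
  ⟨Empty, inferInstance, Empty.elim, Empty.elim, fun i => i.elim, by simp⟩

theorem univ : HasStanleyDecomposition (Set.univ : Set (ι → ℕ)) :=
  ⟨Unit, inferInstance, fun _ => 0, fun _ => Set.univ, Subsingleton.pairwise,
    by simp only [shiftedFace_zero_univ, Set.iUnion_const]⟩

theorem iUnion {κ : Type} [Finite κ] {M : κ → Set (ι → ℕ)}
    (hM : ∀ k, HasStanleyDecomposition (M k)) (hdisj : Pairwise (Disjoint on M)) :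
    HasStanleyDecomposition (⋃ k, M k) := by
  choose ν _ a J hd hM using hM
  refine ⟨Σ k, ν k, inferInstance, fun p => a p.1 p.2, fun p => J p.1 p.2, ?_, ?_⟩
  · rintro ⟨k, i⟩ ⟨l, j⟩ hne
    by_cases hkl : k = l
    · subst hkl
      exact hd k fun hij => hne (congrArg _ hij)
    · refine (hdisj hkl).mono ?_ ?_
      · exact (hM k).symm ▸ Set.subset_iUnion (fun i => shiftedFace (a k i) (J k i)) i
      · exact (hM l).symm ▸ Set.subset_iUnion (fun j => shiftedFace (a l j) (J l j)) j
  · simp only [hM, Set.iUnion_sigma]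

theorem union {M₁ M₂ : Set (ι → ℕ)} (h₁ : HasStanleyDecomposition M₁)
    (h₂ : HasStanleyDecomposition M₂) (hdisj : Disjoint M₁ M₂) :
    HasStanleyDecomposition (M₁ ∪ M₂) := by
  rw [Set.union_eq_iUnion]
  exact iUnion (Bool.forall_bool.2 ⟨h₂, h₁⟩) (pairwise_disjoint_on_bool.2 hdisj)

theorem inter_preimage {ι' : Type*} {S : Set (ι → ℕ)} {C : Set (ι' → ℕ)} {f : (ι' → ℕ) → ι → ℕ}
    (hS : HasStanleyDecomposition S)
    (hC : ∀ a J, ∃ a' J', C ∩ f ⁻¹' shiftedFace a J = shiftedFace a' J') :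
    HasStanleyDecomposition (C ∩ f ⁻¹' S) := by
  obtain ⟨κ, _, a, J, hd, rfl⟩ := hS
  choose a' J' h using fun i => hC (a i) (J i)
  refine ⟨κ, inferInstance, a', J', fun i j hij => ?_, ?_⟩
  · simp only [Function.onFun, ← h]
    exact ((hd hij).preimage f).mono Set.inter_subset_right Set.inter_subset_right
  · simp only [← h, Set.preimage_iUnion, Set.inter_iUnion]

theorem exists_fin {M : Set (ι → ℕ)} (h : HasStanleyDecomposition M) :
    ∃ (r : ℕ) (a : Fin r → ι → ℕ) (J : Fin r → Set ι),
      (Pairwise fun i j => Disjoint (shiftedFace (a i) (J i)) (shiftedFace (a j) (J j))) ∧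
      M = ⋃ i, shiftedFace (a i) (J i) := by
  obtain ⟨κ, _, a, J, hd, rfl⟩ := h
  obtain ⟨r, ⟨e⟩⟩ := Finite.exists_equiv_fin κ
  refine ⟨r, a ∘ e.symm, J ∘ e.symm, fun i j hij => hd (e.symm.injective.ne hij), ?_⟩
  exact (e.symm.surjective.iUnion_comp fun i => shiftedFace (a i) (J i)).symm

end HasStanleyDecomposition

namespace AddSemigroupIdeal

variable {n : ℕ}

def slice (I : AddSemigroupIdeal (Fin (n + 1) → ℕ)) : ℕ →o AddSemigroupIdeal (Fin n → ℕ) where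
  toFun k :=
    { carrier := {y | Fin.cons k y ∈ I}
      vadd_mem' c y hy := by
        simpa [Fin.cons_add_cons] using I.add_mem (Fin.cons 0 c) hy }
  monotone' k l hkl y hy := by
    change Fin.cons k y ∈ I at hy
    change Fin.cons l y ∈ I
    simpa [Fin.cons_add_cons, Nat.sub_add_cancel hkl] using I.add_mem (Fin.cons (l - k) 0) hy

theorem mem_slice {I : AddSemigroupIdeal (Fin (n + 1) → ℕ)} {k : ℕ} {y : Fin n → ℕ} :
    y ∈ slice I k ↔ Fin.cons k y ∈ I :=
  Iff.rfl

theorem coe_eq_union_slices (I : AddSemigroupIdeal (Fin (n + 1) → ℕ)) {N : ℕ}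
    (hN : ∀ m, N ≤ m → slice I N = slice I m) :
    (I : Set (Fin (n + 1) → ℕ)) =
      (⋃ k : Fin N, {z | z 0 = (k : ℕ)} ∩ Fin.tail ⁻¹' slice I k) ∪
        ({z | N ≤ z 0} ∩ Fin.tail ⁻¹' slice I N) := by
  ext z
  have hz : z ∈ I ↔ Fin.tail z ∈ slice I (z 0) := by rw [mem_slice, Fin.cons_self_tail]
  simp only [SetLike.mem_coe, hz, Set.mem_union, Set.mem_iUnion, Set.mem_inter_iff,
    Set.mem_ofPred_eq, Set.mem_preimage]
  rcases lt_or_ge (z 0) N with h | h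
  · simp only [h.not_ge, false_and, or_false]
    exact ⟨fun hy => ⟨⟨z 0, h⟩, rfl, hy⟩, fun ⟨k, hk, hy⟩ => hk ▸ hy⟩
  · simp only [h, true_and, hN _ h]
    exact ⟨Or.inr, Or.rec (fun ⟨k, hk, _⟩ => absurd (hk ▸ k.is_lt) h.not_gt) id⟩

theorem hasStanleyDecomposition :
    ∀ {n : ℕ} (I : AddSemigroupIdeal (Fin n → ℕ)), HasStanleyDecomposition (I : Set (Fin n → ℕ))
  | 0, I => Subsingleton.set_cases (p := HasStanleyDecomposition) .empty .univ _
  | n + 1, I => by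
    obtain ⟨N, hN⟩ := WellFoundedGT.monotone_chain_condition (slice I)
    rw [coe_eq_union_slices I hN]
    refine .union (.iUnion (fun k => ?_) ?_) ?_ ?_
    · exact (hasStanleyDecomposition _).inter_preimage fun a J =>
        ⟨Fin.cons k a, Fin.succ '' J, (shiftedFace_cons_image_succ _ a J).symm⟩
    · intro k l hkl
      refine Set.disjoint_left.2 fun z hk hl => hkl (Fin.ext ?_)
      exact hk.1.symm.trans hl.1
    · exact (hasStanleyDecomposition _).inter_preimage fun a J =>
        ⟨Fin.cons N a, insert 0 (Fin.succ '' J), (shiftedFace_cons_insert_zero _ a J).symm⟩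
    · refine Set.disjoint_iUnion_left.2 fun k => Set.disjoint_left.2 fun z hk hN => ?_
      exact absurd (hk.1 ▸ k.is_lt) hN.1.not_gt

end AddSemigroupIdeal

/-- Every ideal `M ⊆ ℕ^n` (a subset with `M + ℕ^n ⊆ M`) has a Stanley
decomposition: `M` is a finite disjoint union of translates `aᵢ + ℕ^{Jᵢ}` of
faces `ℕ^{Jᵢ} = {x ∈ ℕ^n : xⱼ = 0 for j ∉ Jᵢ}` of `ℕ^n`. -/
theorem stanley_decomposition {n : ℕ} (M : Set (Fin n → ℕ))
    (hM : ∀ m ∈ M, ∀ x : Fin n → ℕ, m + x ∈ M) :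
    ∃ (r : ℕ) (a : Fin r → (Fin n → ℕ)) (J : Fin r → Set (Fin n)),
      (Pairwise fun i j => Disjoint
        (({a i} : Set (Fin n → ℕ)) + {x : Fin n → ℕ | ∀ k ∉ J i, x k = 0})
        (({a j} : Set (Fin n → ℕ)) + {x : Fin n → ℕ | ∀ k ∉ J j, x k = 0})) ∧
      M = ⋃ i, (({a i} : Set (Fin n → ℕ)) + {x : Fin n → ℕ | ∀ k ∉ J i, x k = 0}) := by
  let I : AddSemigroupIdeal (Fin n → ℕ) :=
    { carrier := M
      vadd_mem' c m hm := by simpa [add_comm] using hM m hm c }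
  exact I.hasStanleyDecomposition.exists_fin
end

section
/- Fix a normal affine semigroup A ⊆ ℤ^d. For any subgroup L of the group ℤA generated by A, any u ∈ ℤ^d, and any ideal M ⊆ A, the intersection (u + L) ∩ M is a finitely generated module over the monoid L ∩ A; that is, there exists a finite set F ⊆ ℤ^d such that (u + L) ∩ M = F + (L ∩ A). -/
/-!
Every subset of a finitely generated commutative monoid `A` is covered by the translates `f + A`
of finitely many of its elements: the monomials with exponents in the subset generate an ideal of
the Noetherian ring `ℤ[A]`, hence finitely many of them suffice, and a monomial lies in a monomial
ideal only if its exponent is a translate of one of the generators. Applied to `(u + L) ∩ M ⊆ A`,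
the translating elements are differences of two points of `u + L`, so they lie in `L ∩ A`.
-/

open Pointwise

theorem AddMonoid.exists_finset_subset_subset_add_univ {A : Type*} [AddCommMonoid A]
    [AddMonoid.FG A] (S : Set A) : ∃ F : Finset A, ↑F ⊆ S ∧ S ⊆ (F : Set A) + Set.univ := by
  classical
  have : IsNoetherianRing (AddMonoidAlgebra ℤ A) := Algebra.FiniteType.isNoetherianRing ℤ _
  obtain ⟨G, hGS, hspan⟩ := (Submodule.fg_span_iff_fg_span_finset_subset _).1
    (IsNoetherian.noetherian (Ideal.span (AddMonoidAlgebra.of' ℤ A '' S)))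
  obtain ⟨F, hFS, rfl⟩ := Finset.subset_set_image_iff.1 hGS
  refine ⟨F, hFS, fun s hs => ?_⟩
  have hsF : AddMonoidAlgebra.of' ℤ A s ∈ Ideal.span (AddMonoidAlgebra.of' ℤ A '' F) := by
    rw [← Finset.coe_image, Ideal.span, ← hspan]
    exact Ideal.subset_span ⟨s, hs, rfl⟩
  obtain ⟨f, hf, a, rfl⟩ := AddMonoidAlgebra.mem_ideal_span_of'_image.1 hsF s (by simp)
  exact ⟨f, hf, a, trivial, add_comm f a⟩

theorem AddSubmonoid.FG.exists_finset_subset_subset_add {G : Type*} [AddCommMonoid G]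
    {A : AddSubmonoid G} (hA : A.FG) {S : Set G} (hSA : S ⊆ A) :
    ∃ F : Finset G, ↑F ⊆ S ∧ S ⊆ ↑F + ↑A := by
  have : AddMonoid.FG A := AddMonoid.fg_iff_addSubmonoid_fg A |>.2 hA
  obtain ⟨F, hFS, hSF⟩ := AddMonoid.exists_finset_subset_subset_add_univ ((↑) ⁻¹' S : Set A)
  refine ⟨F.map (Function.Embedding.subtype _), by simpa using hFS, fun s hs => ?_⟩
  obtain ⟨f, hf, a, -, hfa⟩ := hSF (show (⟨s, hSA hs⟩ : A) ∈ _ from hs)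
  exact ⟨f, by simpa using hf, a, a.2, congrArg Subtype.val hfa⟩

theorem add_mem_singleton_add_addSubgroup_iff {G : Type*} [AddCommGroup G] {L : AddSubgroup G}
    {u x a : G} (hx : x ∈ ({u} : Set G) + L) : x + a ∈ ({u} : Set G) + L ↔ a ∈ L := by
  obtain ⟨_, rfl, l, hl, rfl⟩ := hx
  simp [Set.singleton_add, add_assoc, L.add_mem_cancel_left hl]

theorem coset_inter_ideal_fg_module_general {d : ℕ}
    (A : AddSubmonoid (Fin d → ℤ)) (hA : IsNormalAffineSemigroup A)
    (L : AddSubgroup (Fin d → ℤ))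
    (u : Fin d → ℤ)
    (M : Set (Fin d → ℤ)) (hMA : M ⊆ (A : Set (Fin d → ℤ)))
    (hM : ∀ m ∈ M, ∀ a ∈ A, m + a ∈ M) :
    ∃ F : Finset (Fin d → ℤ),
      (({u} : Set (Fin d → ℤ)) + (L : Set (Fin d → ℤ))) ∩ M =
        (F : Set (Fin d → ℤ)) + ((L : Set (Fin d → ℤ)) ∩ (A : Set (Fin d → ℤ))) := by
  obtain ⟨F, hFS, hSF⟩ := hA.1.exists_finset_subset_subset_add (S := ({u} + (L : Set _)) ∩ M)
    fun x hx => hMA hx.2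
  refine ⟨F, subset_antisymm (fun x hx => ?_) ?_⟩
  · obtain ⟨f, hf, a, ha, rfl⟩ := hSF hx
    have haL : a ∈ L := (add_mem_singleton_add_addSubgroup_iff (hFS hf).1).1 hx.1
    exact ⟨f, hf, a, ⟨haL, ha⟩, rfl⟩
  · rintro _ ⟨f, hf, b, ⟨hbL, hbA⟩, rfl⟩
    obtain ⟨hfu, hfM⟩ := hFS hf
    exact ⟨(add_mem_singleton_add_addSubgroup_iff hfu).2 hbL, hM f hfM b hbA⟩

/-- Let `A ⊆ ℤ^d` be a normal affine semigroup. For any subgroup `L` of the group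
`ℤA` generated by `A`, any `u ∈ ℤ^d`, and any ideal `M ⊆ A`, the intersection
`(u + L) ∩ M` is a finitely generated module over the monoid `L ∩ A`. -/
theorem coset_inter_ideal_fg_module {d : ℕ}
    (A : AddSubmonoid (Fin d → ℤ)) (hA : IsNormalAffineSemigroup A)
    (L : AddSubgroup (Fin d → ℤ))
    (hL : (L : Set (Fin d → ℤ)) ⊆ (AddSubgroup.closure (A : Set (Fin d → ℤ)) : Set (Fin d → ℤ)))
    (u : Fin d → ℤ)
    (M : Set (Fin d → ℤ)) (hMA : M ⊆ (A : Set (Fin d → ℤ)))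
    (hM : ∀ m ∈ M, ∀ a ∈ A, m + a ∈ M) :
    ∃ F : Finset (Fin d → ℤ),
      (({u} : Set (Fin d → ℤ)) + (L : Set (Fin d → ℤ))) ∩ M =
        (F : Set (Fin d → ℤ)) + ((L : Set (Fin d → ℤ)) ∩ (A : Set (Fin d → ℤ))) :=
  coset_inter_ideal_fg_module_general A hA L u M hMA hM
end
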